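/- arXiv:1905.09495 — 3 statements merged into one kernel-verified Lean document; each statement's English description precedes it below -/
import Mathlib

section
/- For all s,c ∈ ℕ there exists a graph G with treewidth at most s and with no K_{s,s+2} subgraph such that every coloring of G using at most s colors has a monochromatic component with at least c vertices. -/
open SimpleGraph

/-! ## Basic clustered-coloring vocabulary -/

/-- The monochromatic component of `w` under the coloring `c`: the vertex set of the
connected component containing `w` of the subgraph of `G` induced by the color class of `w`. -/
def monoComponent {V : Type*} {α : Type*} (G : SimpleGraph V) (c : V → α) (w : V) : Set V :=
  Subtype.val '' ((G.induce {u | c u = c w}).connectedComponentMk ⟨w, rfl⟩).supp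

/-- The coloring `c` of `G` has clustering at most `η`:
every monochromatic component has at most `η` vertices. -/
def HasClusteringAtMost {V : Type*} {α : Type*} (G : SimpleGraph V) (c : V → α) (η : ℕ) : Prop :=
  ∀ v : V, (monoComponent G c v).ncard ≤ η

/-- `G` is `k`-colorable with clustering `η`. -/
def ColorableClustered {V : Type*} (G : SimpleGraph V) (k η : ℕ) : Prop :=
  ∃ c : V → Fin k, HasClusteringAtMost G c η

/-- `G` contains a subgraph isomorphic to `H`. -/
def HasSubgraphCopy {V W : Type*} (G : SimpleGraph V) (H : SimpleGraph W) : Prop :=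
  ∃ f : W ↪ V, ∀ a b, H.Adj a b → G.Adj (f a) (f b)

/-- `H` is a minor of `G`: branch-set definition. -/
def HasMinor {V W : Type*} (G : SimpleGraph V) (H : SimpleGraph W) : Prop :=
  ∃ β : W → Set V,
    (∀ h, (β h).Nonempty) ∧
    (∀ h, (G.induce (β h)).Connected) ∧
    (∀ h₁ h₂, h₁ ≠ h₂ → Disjoint (β h₁) (β h₂)) ∧
    (∀ h₁ h₂, H.Adj h₁ h₂ → ∃ u ∈ β h₁, ∃ w ∈ β h₂, G.Adj u w)

/-- `G` has an odd `H`-minor: there are pairwise vertex-disjoint nonempty connected branch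
subgraphs, a `2`-coloring proper on each branch subgraph, and for each edge of `H` an edge of `G`
between the two branch sets whose ends get the same color. -/
def HasOddMinor {V W : Type*} (G : SimpleGraph V) (H : SimpleGraph W) : Prop :=
  ∃ (β : W → G.Subgraph) (c : V → Bool),
    (∀ h, (β h).verts.Nonempty) ∧
    (∀ h, (β h).Connected) ∧
    (∀ h₁ h₂, h₁ ≠ h₂ → Disjoint (β h₁).verts (β h₂).verts) ∧
    (∀ h u w, (β h).Adj u w → c u ≠ c w) ∧
    (∀ h₁ h₂, H.Adj h₁ h₂ → ∃ u ∈ (β h₁).verts, ∃ w ∈ (β h₂).verts, G.Adj u w ∧ c u = c w)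

/-- `G` has a tree decomposition of width at most `w`. -/
def TreewidthAtMost {V : Type*} (G : SimpleGraph V) (w : ℕ) : Prop :=
  ∃ (ι : Type) (T : SimpleGraph ι) (X : ι → Set V),
    T.IsTree ∧
    (∀ v : V, (T.induce {i | v ∈ X i}).Connected) ∧
    (∀ u w : V, G.Adj u w → ∃ i, u ∈ X i ∧ w ∈ X i) ∧
    (∀ i, (X i).ncard ≤ w + 1)

/-- `G` has layered treewidth at most `w`: a tree decomposition and a layering such that every
bag meets every layer in at most `w` vertices. -/
def LayeredTreewidthAtMost {V : Type*} (G : SimpleGraph V) (w : ℕ) : Prop :=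
  ∃ (ι : Type) (T : SimpleGraph ι) (X : ι → Set V) (lay : V → ℕ),
    T.IsTree ∧
    (∀ v : V, (T.induce {i | v ∈ X i}).Connected) ∧
    (∀ u w : V, G.Adj u w → ∃ i, u ∈ X i ∧ w ∈ X i) ∧
    (∀ u w : V, G.Adj u w → lay u ≤ lay w + 1 ∧ lay w ≤ lay u + 1) ∧
    (∀ i j, (X i ∩ {v | lay v = j}).ncard ≤ w)

/-- A stable (independent) set of vertices. -/
def IsStableSet {V : Type*} (G : SimpleGraph V) (S : Set V) : Prop :=
  ∀ u ∈ S, ∀ w ∈ S, ¬ G.Adj u w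

/-- `N^{≥s}(X)`: vertices outside `X` with at least `s` neighbors in `X`. -/
def Nge {V : Type*} (G : SimpleGraph V) (s : ℕ) (X : Set V) : Set V :=
  {v | v ∉ X ∧ s ≤ (G.neighborSet v ∩ X).ncard}

/-- `N^{<s}(X)`: vertices outside `X` with at least one but fewer than `s` neighbors in `X`. -/
def Nlt {V : Type*} (G : SimpleGraph V) (s : ℕ) (X : Set V) : Set V :=
  {v | v ∉ X ∧ 1 ≤ (G.neighborSet v ∩ X).ncard ∧ (G.neighborSet v ∩ X).ncard < s}

/-- The closed neighborhood `N_G[X]`. -/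
def closedNbhd {V : Type*} (G : SimpleGraph V) (X : Set V) : Set V :=
  X ∪ {v | ∃ u ∈ X, G.Adj v u}

/-- `c` is an `L`-coloring. -/
def IsLColoring {V : Type*} (L : V → Finset ℤ) (c : V → ℤ) : Prop :=
  ∀ v, c v ∈ L v

/-- `L` is an `(s,r,Y₁)`-list-assignment of `G` (conditions (L1)–(L5)). -/
def IsSRYList {V : Type*} (G : SimpleGraph V) (s r : ℕ) (Y1 : Set V)
    (L : V → Finset ℤ) : Prop :=
  (∀ v, 1 ≤ (L v).card ∧ (L v).card ≤ s + r) ∧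
  (Y1 = {v | (L v).card = 1}) ∧
  (∀ y ∈ Nlt G s Y1, (L y).card = s + r - (G.neighborSet y ∩ Y1).ncard ∧
      ∀ u ∈ G.neighborSet y ∩ Y1, Disjoint (L y) (L u)) ∧
  (∀ v, v ∉ closedNbhd G Y1 → (L v).card = s + r) ∧
  (∀ v, v ∉ Y1 → r + 1 ≤ (L v).card)

/-- An `(η,g)`-bounded `L`-coloring: the union of the monochromatic components meeting
`Y₁ = {v : |L v| = 1}` has at most `|Y₁|² g(|Y₁|)` vertices, and every monochromatic component
has at most `η² g(η)` vertices. -/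
def IsBoundedColoring {V : Type*} (G : SimpleGraph V) (L : V → Finset ℤ) (c : V → ℤ)
    (η : ℕ) (g : ℕ → ℕ) : Prop :=
  (⋃ v ∈ {v | (L v).card = 1}, monoComponent G c v).ncard
      ≤ ({v | (L v).card = 1} : Set V).ncard ^ 2 * g (({v | (L v).card = 1} : Set V).ncard) ∧
  ∀ v, (monoComponent G c v).ncard ≤ η ^ 2 * g η

/-- `L'` is a `(W,F)`-progress of the `(s,·,Y₁)`-list-assignment `L`. -/
def IsProgress {V : Type*} (G : SimpleGraph V) (s : ℕ) (Y1 : Set V) (L : V → Finset ℤ)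
    (W : Set V) (F : Finset ℤ) (L' : V → Finset ℤ) : Prop :=
  (∀ y ∈ Y1, L' y = L y) ∧
  (∀ y ∈ (Y1 ∪ W) \ Y1, (L' y).card = 1 ∧ L' y ⊆ L y \ F) ∧
  (∀ v ∈ Nlt G s (Y1 ∪ W),
    ((L' v : Set ℤ) ⊆ (L v : Set ℤ) \ ⋃ w ∈ G.neighborSet v ∩ (W \ Y1), (L' w : Set ℤ)) ∧
    (L' v).card = (L v).card - (G.neighborSet v ∩ (W \ Y1)).ncard ∧
    (∀ S : Finset ℤ,
      ((S : Set ℤ) ⊆ (L v : Set ℤ) \ ⋃ w ∈ G.neighborSet v ∩ (W \ Y1), (L' w : Set ℤ)) →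
      S.card = (L v).card - (G.neighborSet v ∩ (W \ Y1)).ncard →
      (S ∩ F).card ≤ (L' v ∩ F).card)) ∧
  (∀ v, v ∉ Y1 ∪ W → v ∉ Nlt G s (Y1 ∪ W) → L' v = L v)

/-- A separation of `G`: a pair of edge-disjoint subgraphs whose union is `G`. -/
def IsSeparation {V : Type*} (G : SimpleGraph V) (A B : G.Subgraph) : Prop :=
  A ⊔ B = ⊤ ∧ Disjoint A.edgeSet B.edgeSet

/-- `T` is a tangle of order `θ` in `G`. -/
def IsTangle {V : Type*} (G : SimpleGraph V) (θ : ℕ)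
    (T : Set (G.Subgraph × G.Subgraph)) : Prop :=
  (∀ p ∈ T, IsSeparation G p.1 p.2 ∧ (p.1.verts ∩ p.2.verts).ncard < θ) ∧
  (∀ A B : G.Subgraph, IsSeparation G A B → (A.verts ∩ B.verts).ncard < θ →
      (A, B) ∈ T ∨ (B, A) ∈ T) ∧
  (∀ p₁ ∈ T, ∀ p₂ ∈ T, ∀ p₃ ∈ T,
      (p₁ : G.Subgraph × G.Subgraph).1 ⊔ (p₂ : G.Subgraph × G.Subgraph).1 ⊔
        (p₃ : G.Subgraph × G.Subgraph).1 ≠ ⊤) ∧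
  (∀ p ∈ T, (p : G.Subgraph × G.Subgraph).1.verts ≠ Set.univ)

/-- A location in `G`: a collection of separations with `A ⊆ B'` for distinct members. -/
def IsLocation {V : Type*} (G : SimpleGraph V)
    (Lc : Set (G.Subgraph × G.Subgraph)) : Prop :=
  (∀ p ∈ Lc, IsSeparation G p.1 p.2) ∧
  (∀ p ∈ Lc, ∀ q ∈ Lc, p ≠ q → p.1 ≤ q.2)

/-- `L` is an `(s,Y₁,ℓ,r)`-list-assignment of `G` (conditions (R1)–(R5)). -/
def IsRList {V : Type*} (G : SimpleGraph V) (s : ℕ) (Y1 : Set V) (ℓ r : ℕ)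
    (L : V → Finset ℤ) : Prop :=
  (∀ v, L v ⊆ Finset.Icc (1 : ℤ) ((s : ℤ) + 2 + (r : ℤ))) ∧
  IsSRYList G s (r + 2) Y1 L ∧
  (∀ y ∈ Y1, ∀ x ∈ L y, (x = (ℓ : ℤ) ∨ x ∈ Finset.Icc ((s : ℤ) + 3) ((s : ℤ) + 2 + (r : ℤ))) →
      ∀ w ∈ G.neighborSet y, w ∉ Y1 → x ∉ L w) ∧
  (∀ x ∈ Finset.Icc ((s : ℤ) + 3) ((s : ℤ) + 2 + (r : ℤ)),
      IsStableSet G {y | y ∈ Y1 ∧ x ∈ L y}) ∧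
  (∀ v, v ∉ Y1 →
      ({y | y ∈ G.neighborSet v ∩ Y1 ∧
          L y ⊆ Finset.Icc ((s : ℤ) + 3) ((s : ℤ) + 2 + (r : ℤ))}).ncard
        = r - (L v ∩ Finset.Icc ((s : ℤ) + 3) ((s : ℤ) + 2 + (r : ℤ))).card)

/-- `L'` (with associated set `Y₁'`) is a `(Z,ℓ)`-growth of the `(s,Y₁,ℓ,r)`-list-assignment
`L`.  Indices are shifted by one: `Yseq j` is the paper's `Y₁^{(j-1)}` and `Lseq j` is
`L^{(j-1)}`. -/
def IsZGrowth {V : Type*} (G : SimpleGraph V) (s : ℕ) (Y1 : Set V) (ℓ r : ℕ)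
    (L : V → Finset ℤ) (Z : Set V) (L' : V → Finset ℤ) (Y1' : Set V) : Prop :=
  ∃ (Lseq : ℕ → V → Finset ℤ) (Yseq : ℕ → Set V) (U : ℕ → Set V),
    Lseq 0 = L ∧ Yseq 0 = Y1 ∧ U 0 = Z ∧
    (∀ i, 1 ≤ i → i ≤ s + 2 → U i = Nge G s (Yseq i)) ∧
    (∀ i, i ≤ s + 2 → Yseq (i + 1) = Yseq i ∪ U i) ∧
    (∀ i, i ≤ s + 2 →
      IsProgress G s (Yseq i) (Lseq i) (U i)
        (insert (ℓ : ℤ) (insert (i : ℤ) (Finset.Icc ((s : ℤ) + 3) ((s : ℤ) + 2 + (r : ℤ)))))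
        (Lseq (i + 1)) ∧
      ∀ v, v ∉ Yseq i ∪ U i →
        Lseq (i + 1) v ∩ Finset.Icc ((s : ℤ) + 3) ((s : ℤ) + 2 + (r : ℤ))
          = Lseq i v ∩ Finset.Icc ((s : ℤ) + 3) ((s : ℤ) + 2 + (r : ℤ))) ∧
    L' = Lseq (s + 3) ∧ Y1' = Yseq (s + 3)

/-- The closure of the broom of height `h` with `m` star-leaves, where `a = h - 1`:
the join of a complete graph on `a` vertices (the closure of the path from the root to the
star center) with an edgeless graph on `m` vertices (the star leaves). -/
def broomClosure (a m : ℕ) : SimpleGraph (Fin a ⊕ Fin m) :=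
  SimpleGraph.fromRel (fun x _ => x.isLeft = true)

section Aux

lemma edges_get' {V : Type*} {G : SimpleGraph V} {u v : V} (p : G.Walk u v) :
    ∀ (i : ℕ) (h : i < p.edges.length),
      p.edges.get ⟨i, h⟩ = s(p.getVert i, p.getVert (i+1)) := by
  induction p with
  | nil => intro i h; simp at h
  | cons ha q ih =>
    intro i h
    cases i with
    | zero =>
      simp [Walk.edges_cons, Walk.getVert_zero, Walk.getVert_cons_succ]
    | succ i =>
      simp only [Walk.edges_cons, List.get_cons_succ, Walk.getVert_cons_succ]
      exact ih i _

lemma isAcyclic_pathGraph (n : ℕ) : (pathGraph n).IsAcyclic := by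
  intro v w hw
  have h3 : 3 ≤ w.length := hw.three_le_length
  have hnodup : w.edges.Nodup := hw.isCircuit.isTrail.edges_nodup
  obtain ⟨i₀, hi₀mem, hle⟩ :=
    Finset.exists_max_image (Finset.range w.length) (fun i => (w.getVert i).val)
      ⟨0, by simp; omega⟩
  simp only [Finset.mem_range] at hi₀mem
  have key : ∀ a b : Fin n, (pathGraph n).Adj a b → b.val ≤ a.val → b.val + 1 = a.val := by
    intro a b hab hba
    rw [pathGraph_adj] at hab
    omega
  have hL : w.getVert w.length = v := w.getVert_length
  have hv0 : w.getVert 0 = v := w.getVert_zero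
  have hlen : w.edges.length = w.length := by simp [Walk.length_edges]
  rcases Nat.eq_zero_or_pos i₀ with h0 | hpos
  · subst h0
    have ha1 : (pathGraph n).Adj (w.getVert 0) (w.getVert 1) :=
      w.adj_getVert_succ (by omega)
    have ha2 : (pathGraph n).Adj (w.getVert (w.length - 1)) (w.getVert w.length) := by
      have := w.adj_getVert_succ (i := w.length - 1) (by omega)
      rwa [Nat.sub_add_cancel (by omega)] at this
    rw [hL] at ha2
    have e1 : (w.getVert 1).val + 1 = (w.getVert 0).val :=
      key _ _ ha1 (hle 1 (by simp; omega))
    rw [hv0] at e1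
    have h' := hle (w.length - 1) (by simp; omega)
    rw [hv0] at h'
    have e2 := key v (w.getVert (w.length - 1)) ha2.symm h'
    have heq : w.getVert 1 = w.getVert (w.length - 1) := Fin.ext (by omega)
    have g1 : w.edges.get ⟨0, by omega⟩ = s(w.getVert 0, w.getVert 1) := edges_get' w 0 _
    rw [hv0] at g1
    have g2 : w.edges.get ⟨w.length - 1, by omega⟩
        = s(w.getVert (w.length - 1), w.getVert w.length) := by
      have := edges_get' w (w.length - 1) (by omega)
      rwa [Nat.sub_add_cancel (by omega)] at this
    rw [hL, ← heq] at g2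
    have : (⟨0, by omega⟩ : Fin w.edges.length) = ⟨w.length - 1, by omega⟩ := by
      rw [← hnodup.get_inj_iff, g1, g2, Sym2.eq_swap]
    simp only [Fin.mk.injEq] at this
    omega
  · have ha1 : (pathGraph n).Adj (w.getVert (i₀ - 1)) (w.getVert i₀) := by
      have := w.adj_getVert_succ (i := i₀ - 1) (by omega)
      rwa [Nat.sub_add_cancel (by omega)] at this
    have ha2 : (pathGraph n).Adj (w.getVert i₀) (w.getVert (i₀ + 1)) :=
      w.adj_getVert_succ (by omega)
    have e1 : (w.getVert (i₀ - 1)).val + 1 = (w.getVert i₀).val :=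
      key _ _ ha1.symm (hle _ (by simp; omega))
    have e2 : (w.getVert (i₀ + 1)).val + 1 = (w.getVert i₀).val := by
      rcases Nat.lt_or_ge (i₀ + 1) w.length with h | h
      · exact key _ _ ha2 (hle _ (by simpa using h))
      · have hi1 : i₀ + 1 = w.length := by omega
        refine key _ _ ha2 ?_
        rw [hi1, hL]
        have := hle 0 (by simp; omega)
        rwa [hv0] at this
    have heq : w.getVert (i₀ - 1) = w.getVert (i₀ + 1) := Fin.ext (by omega)
    have g1 : w.edges.get ⟨i₀ - 1, by omega⟩
        = s(w.getVert (i₀ - 1), w.getVert i₀) := by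
      have := edges_get' w (i₀ - 1) (by omega)
      rwa [Nat.sub_add_cancel (by omega)] at this
    have g2 : w.edges.get ⟨i₀, by omega⟩ = s(w.getVert i₀, w.getVert (i₀+1)) :=
      edges_get' w i₀ (by omega)
    have : (⟨i₀ - 1, by omega⟩ : Fin w.edges.length) = ⟨i₀, by omega⟩ := by
      rw [← hnodup.get_inj_iff, g1, g2, heq, Sym2.eq_swap]
    simp only [Fin.mk.injEq] at this
    omega


lemma induced_interval_connected (M a b : ℕ) (hab : a < b) (haM : a < M) :
    ((pathGraph M).induce {t : Fin M | a ≤ t.val ∧ t.val < b}).Connected := by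
  set S : Set (Fin M) := {t : Fin M | a ≤ t.val ∧ t.val < b} with hS
  have hmem : (⟨a, haM⟩ : Fin M) ∈ S := ⟨le_refl a, hab⟩
  have hreach : ∀ (d : ℕ) (x : S), x.1.val = a + d →
      ((pathGraph M).induce S).Reachable x ⟨⟨a, haM⟩, hmem⟩ := by
    intro d
    induction d with
    | zero =>
      intro x hx
      have : x = ⟨⟨a, haM⟩, hmem⟩ := Subtype.ext (Fin.ext (by simpa using hx))
      rw [this]
    | succ d ih =>
      intro x hx
      have hy : (⟨a + d, by have := x.1.isLt; omega⟩ : Fin M) ∈ S :=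
        ⟨by simp, by simp; have := x.2.2; omega⟩
      have hadj : ((pathGraph M).induce S).Adj ⟨⟨a + d, _⟩, hy⟩ x := by
        show (pathGraph M).Adj _ x.1
        rw [pathGraph_adj]
        left; simp [hx]; omega
      exact (hadj.symm.reachable).trans (ih ⟨⟨a + d, _⟩, hy⟩ rfl)
  haveI : Nonempty S := ⟨⟨⟨a, haM⟩, hmem⟩⟩
  refine ⟨fun x y => ?_⟩
  exact (hreach (x.1.val - a) x (by have := x.2.1; omega)).trans
    (hreach (y.1.val - a) y (by have := y.2.1; omega)).symm


/-- vertex type: level `k ∈ [1,s]`, position `p < N^k`. -/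
abbrev PV (N s : ℕ) : Type :=
  {q : Fin (s+1) × Fin (N^s) // 1 ≤ q.1.val ∧ q.2.val < N^q.1.val}

namespace PV
variable {N s : ℕ}
def lvl (v : PV N s) : ℕ := v.1.1.val
def pos (v : PV N s) : ℕ := v.1.2.val
lemma one_le_lvl (v : PV N s) : 1 ≤ v.lvl := v.2.1
lemma lvl_le (v : PV N s) : v.lvl ≤ s := by have := v.1.1.isLt; unfold lvl; omega
lemma pos_lt (v : PV N s) : v.pos < N ^ v.lvl := v.2.2
lemma ext' {u v : PV N s} (h1 : u.lvl = v.lvl) (h2 : u.pos = v.pos) : u = v := by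
  apply Subtype.ext; apply Prod.ext <;> apply Fin.ext <;> assumption
end PV

def mkPV (N s k p : ℕ) (hN : 1 ≤ N) (h1 : 1 ≤ k) (h2 : k ≤ s) (h3 : p < N^k) : PV N s :=
  ⟨(⟨k, by omega⟩, ⟨p, lt_of_lt_of_le h3 (Nat.pow_le_pow_right hN h2)⟩), ⟨h1, h3⟩⟩

@[simp] lemma lvl_mkPV {N s k p hN h1 h2 h3} : (mkPV N s k p hN h1 h2 h3).lvl = k := rfl
@[simp] lemma pos_mkPV {N s k p hN h1 h2 h3} : (mkPV N s k p hN h1 h2 h3).pos = p := rfl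

/-- prefix relation -/
def prel {N s : ℕ} (u v : PV N s) : Prop :=
  u.lvl < v.lvl ∧ u.pos = v.pos / N ^ (v.lvl - u.lvl)

/-- path-sibling relation -/
def srel (N : ℕ) {s : ℕ} (u v : PV N s) : Prop :=
  u.lvl = s ∧ v.lvl = s ∧ v.pos = u.pos + 1 ∧ (u.pos + 1) % N ≠ 0

def myG (N s : ℕ) : SimpleGraph (PV N s) :=
  SimpleGraph.fromRel (fun u v => prel u v ∨ srel N u v)

lemma myG_adj {N s : ℕ} {u v : PV N s} :
    (myG N s).Adj u v ↔ u ≠ v ∧ (prel u v ∨ srel N u v ∨ prel v u ∨ srel N v u) := by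
  rw [myG, fromRel_adj]; tauto

lemma div_pow_add (N p a b : ℕ) : p / N ^ a / N ^ b = p / N ^ (a + b) := by
  rw [Nat.div_div_eq_div_mul, pow_add]

lemma prel_trans {N s : ℕ} {u v w : PV N s} (h1 : prel u v) (h2 : prel v w) : prel u w := by
  obtain ⟨l1, p1⟩ := h1; obtain ⟨l2, p2⟩ := h2
  refine ⟨by omega, ?_⟩
  rw [p1, p2, div_pow_add,
    show w.lvl - v.lvl + (v.lvl - u.lvl) = w.lvl - u.lvl from by omega]

/-- two prefixes of a common vertex, with smaller level, are related -/
lemma prel_of_common {N s : ℕ} {u v w : PV N s} (h1 : prel u w) (h2 : prel v w)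
    (hl : u.lvl < v.lvl) : prel u v := by
  obtain ⟨l1, p1⟩ := h1; obtain ⟨l2, p2⟩ := h2
  refine ⟨hl, ?_⟩
  rw [p1, p2, div_pow_add,
    show w.lvl - v.lvl + (v.lvl - u.lvl) = w.lvl - u.lvl from by omega]

lemma eq_of_common {N s : ℕ} {u v w : PV N s} (h1 : prel u w) (h2 : prel v w)
    (hl : u.lvl = v.lvl) : u = v := by
  obtain ⟨l1, p1⟩ := h1; obtain ⟨l2, p2⟩ := h2
  exact PV.ext' hl (by rw [p1, p2, hl])

lemma mem_monoComponent' {V : Type*} {α : Type*} {G : SimpleGraph V} {f : V → α} {u w : V}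
    (h : f w = f u)
    (hr : (G.induce {x | f x = f u}).Reachable ⟨w, h⟩ ⟨u, rfl⟩) : w ∈ monoComponent G f u :=
  ⟨⟨w, h⟩, (ConnectedComponent.mem_supp_iff _ _).2 (ConnectedComponent.sound hr), rfl⟩

lemma self_mem_monoComponent {V : Type*} {α : Type*} {G : SimpleGraph V} {f : V → α} {u : V} :
    u ∈ monoComponent G f u := mem_monoComponent' rfl (Reachable.refl _)

lemma adj_mem_monoComponent {V : Type*} {α : Type*} {G : SimpleGraph V} {f : V → α} {u w : V}
    (h : f w = f u) (ha : G.Adj w u) : w ∈ monoComponent G f u :=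
  mem_monoComponent' h
    (SimpleGraph.Adj.reachable (by exact ha :
      (G.induce {x | f x = f u}).Adj ⟨w, h⟩ ⟨u, rfl⟩))

lemma card_le_mono {V : Type*} [Fintype V] {α : Type*} {G : SimpleGraph V} {f : V → α} {u : V}
    {F : Finset V} (hF : ∀ x ∈ F, x ∈ monoComponent G f u) :
    F.card ≤ (monoComponent G f u).ncard := by
  rw [← Set.ncard_coe_finset]
  exact Set.ncard_le_ncard (fun x hx => hF x (by simpa using hx)) (Set.toFinite _)


lemma qNi_div (N q i : ℕ) (hN : 0 < N) (hi : i < N) : (q*N + i)/N = q :=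
  Nat.div_eq_of_lt_le (by omega) (by rw [add_mul, one_mul]; omega)

lemma child_bound {N q i k : ℕ} (hq : q < N^k) (hi : i < N) : q*N + i < N^(k+1) := by
  have h1 : (q+1) * N ≤ N^k * N := Nat.mul_le_mul_right _ (by omega)
  have h2 : q*N + i < (q+1)*N := by rw [add_mul, one_mul]; omega
  rw [pow_succ]; omega

lemma child_div {N q i p L : ℕ} (hN : 0 < N) (hi : i < N) (hL : 1 ≤ L)
    (h : p / N^(L-1) = q*N + i) : p / N^L = q := by
  have h2 : p / N^(L-1) / N^1 = p / N^L := by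
    rw [div_pow_add, show L - 1 + 1 = L from by omega]
  rw [← h2, pow_one, h, qNi_div N q i hN hi]

/-- total path-vertex function -/
def PP (N s : ℕ) (hN : 1 ≤ N) (hs : 1 ≤ s) (p : ℕ) : PV N s :=
  if h : p < N^s then mkPV N s s p hN hs le_rfl h
  else mkPV N s 1 0 hN le_rfl hs (by rw [pow_one]; omega)

lemma lvl_PP {N s : ℕ} {hN hs} {p : ℕ} (h : p < N^s) : (PP N s hN hs p).lvl = s := by
  simp [PP, dif_pos h]

lemma pos_PP {N s : ℕ} {hN hs} {p : ℕ} (h : p < N^s) : (PP N s hN hs p).pos = p := by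
  simp [PP, dif_pos h]

lemma run_mono (N s : ℕ) (hN : 1 ≤ N) (hs : 1 ≤ s) {β : Type*} (f : PV N s → β)
    (base len : ℕ) (hbound : base + len ≤ N^s)
    (hmod : ∀ m, m + 1 < len → (base + m + 1) % N ≠ 0)
    (hcol : ∀ m, m < len → f (PP N s hN hs (base + m)) = f (PP N s hN hs base)) :
    ∀ m, m < len →
      PP N s hN hs (base + m) ∈ monoComponent (myG N s) f (PP N s hN hs base) := by
  set G := myG N s
  set u0 := PP N s hN hs base with hu0
  have claim : ∀ m, m < len → ∀ (hc : f (PP N s hN hs (base + m)) = f u0),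
      (G.induce {x | f x = f u0}).Reachable ⟨PP N s hN hs (base + m), hc⟩ ⟨u0, rfl⟩ := by
    intro m
    induction m with
    | zero =>
      intro _ hc
      exact Reachable.refl _
    | succ m ih =>
      intro hm hc
      have hb1 : base + m < N^s := by omega
      have hb2 : base + (m+1) < N^s := by omega
      have hadj : G.Adj (PP N s hN hs (base + (m+1))) (PP N s hN hs (base + m)) := by
        rw [myG_adj]
        constructor
        · intro he
          have := congrArg PV.pos he
          rw [pos_PP hb2, pos_PP hb1] at this
          omega
        · refine Or.inr (Or.inr (Or.inr ?_))
          refine ⟨lvl_PP hb1, lvl_PP hb2, ?_, ?_⟩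
          · rw [pos_PP hb2, pos_PP hb1]; omega
          · rw [pos_PP hb1]
            have := hmod m (by omega)
            rwa [show base + m + 1 = base + (m+1) from by omega] at *
      have hcm : f (PP N s hN hs (base + m)) = f u0 := hcol m (by omega)
      have hadj' : (G.induce {x | f x = f u0}).Adj
          ⟨PP N s hN hs (base + (m+1)), hc⟩ ⟨PP N s hN hs (base + m), hcm⟩ := hadj
      exact (hadj'.reachable).trans (ih (by omega) hcm)
  intro m hm
  exact mem_monoComponent' (hcol m hm) (claim m hm (hcol m hm))


lemma main_ind (N s c : ℕ) (hc : 1 ≤ c) (hNc : c*c + c ≤ N) (f : PV N s → Fin s) :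
    ∀ d, 1 ≤ d → ∀ k q (C : Finset (Fin s)), 1 ≤ k → k + d = s → q < N^k →
    (∀ v : PV N s, k ≤ v.lvl → v.pos / N^(v.lvl - k) = q → f v ∈ C) →
    C.card ≤ d + 1 →
    ∃ w, c ≤ (monoComponent (myG N s) f w).ncard := by
  have hN1 : 1 ≤ N := by nlinarith
  intro d
  induction d with
  | zero => omega
  | succ d ih =>
    intro _ k q C hk hkd hq hD hC
    have hs1 : 1 ≤ s := by omega
    set G := myG N s with hG
    set u : PV N s := mkPV N s k q hN1 hk (by omega) hq with hu
    set α := f u with hα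
    have hαC : α ∈ C := by
      refine hD u (by simp [hu]) ?_
      simp [hu, Nat.sub_self, pow_zero, Nat.div_one]
    rcases Nat.eq_zero_or_pos d with hd0 | hd1
    · -- BASE CASE: d = 0, s = k + 1, path below the apex u
      subst hd0
      have hsk : s = k + 1 := by omega
      have hks : k < s := by omega
      have hPbound : ∀ j, j < N → q*N + j < N^s := by
        intro j hj
        rw [hsk]
        exact child_bound hq hj
      have hPD : ∀ j, j < N →
          s ≤ (PP N s hN1 hs1 (q*N+j)).lvl ∧
          (PP N s hN1 hs1 (q*N+j)).pos / N^((PP N s hN1 hs1 (q*N+j)).lvl - k) = q := by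
        intro j hj
        refine ⟨(lvl_PP (hPbound j hj)).ge, ?_⟩
        rw [lvl_PP (hPbound j hj), pos_PP (hPbound j hj),
          show s - k = 1 from by omega, pow_one]
        exact qNi_div N q j (by omega) hj
      set A := (Finset.range N).filter (fun j => f (PP N s hN1 hs1 (q*N + j)) = α) with hA
      by_cases hAc : c ≤ A.card + 1
      · -- star around u
        refine ⟨u, ?_⟩
        set F := insert u (A.image (fun j => PP N s hN1 hs1 (q*N+j))) with hF
        have hinj : Set.InjOn (fun j => PP N s hN1 hs1 (q*N+j)) A := by
          intro j hj j' hj' he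
          have hj1 : j < N := by simpa using (Finset.mem_filter.mp hj).1
          have hj2 : j' < N := by simpa using (Finset.mem_filter.mp hj').1
          have := congrArg PV.pos he
          rw [pos_PP (hPbound j hj1), pos_PP (hPbound j' hj2)] at this
          omega
        have hnotmem : u ∉ A.image (fun j => PP N s hN1 hs1 (q*N+j)) := by
          intro hmem
          obtain ⟨j, hj, he⟩ := Finset.mem_image.mp hmem
          have hj1 : j < N := by simpa using (Finset.mem_filter.mp hj).1
          have := congrArg PV.lvl he
          rw [lvl_PP (hPbound j hj1)] at this
          simp [hu] at this
          omega
        have hcard : A.card + 1 ≤ F.card := by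
          rw [hF, Finset.card_insert_of_notMem hnotmem, Finset.card_image_of_injOn hinj]
        refine le_trans (le_trans hAc hcard) (card_le_mono ?_)
        intro x hx
        rcases Finset.mem_insert.mp hx with rfl | hx
        · exact self_mem_monoComponent
        · obtain ⟨j, hj, rfl⟩ := Finset.mem_image.mp hx
          have hj1 : j < N := by simpa using (Finset.mem_filter.mp hj).1
          have hcol : f (PP N s hN1 hs1 (q*N+j)) = f u := (Finset.mem_filter.mp hj).2
          refine adj_mem_monoComponent hcol ?_
          rw [hG, myG_adj]
          constructor
          · intro he
            have := congrArg PV.lvl he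
            rw [lvl_PP (hPbound j hj1)] at this
            simp [hu] at this
            omega
          · refine Or.inr (Or.inr (Or.inl ?_))
            refine ⟨?_, ?_⟩
            · rw [lvl_PP (hPbound j hj1)]; simp [hu]; omega
            · simp only [hu, pos_mkPV]
              rw [lvl_PP (hPbound j hj1)]
              have h2 := (hPD j hj1).2
              rw [lvl_PP (hPbound j hj1)] at h2
              exact h2.symm
      · -- find a long monochromatic run on the path
        have hc2 : 2 ≤ c := by omega
        have hT : ∃ t, t < c + 1 ∧ ∀ j ∈ A, j / c ≠ t := by
          by_contra hcon
          push_neg at hcon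
          have hsub : Finset.range (c+1) ⊆ A.image (fun j => j / c) := by
            intro t ht
            obtain ⟨j, hj, he⟩ := hcon t (Finset.mem_range.mp ht)
            exact Finset.mem_image.mpr ⟨j, hj, he⟩
          have h1 := Finset.card_le_card hsub
          have h2 := Finset.card_image_le (s := A) (f := fun j => j / c)
          rw [Finset.card_range] at h1
          omega
        obtain ⟨t, ht, hAt⟩ := hT
        set base := q*N + t*c with hbase
        have hjN : ∀ m, m < c → t*c + m < N := by
          intro m hm
          have : t*c ≤ c*c := Nat.mul_le_mul_right _ (by omega)
          omega
        have hnα : ∀ m, m < c → f (PP N s hN1 hs1 (base + m)) ≠ α := by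
          intro m hm he
          have hj : t*c + m ∈ A := by
            rw [hA, Finset.mem_filter]
            refine ⟨Finset.mem_range.mpr (hjN m hm), ?_⟩
            rwa [show q*N + (t*c+m) = base + m from by rw [hbase]; ring] 
          exact hAt _ hj (Nat.div_eq_of_lt_le (by omega) (by rw [add_mul, one_mul]; omega))
        have hmemC : ∀ m, m < c → f (PP N s hN1 hs1 (base + m)) ∈ C.erase α := by
          intro m hm
          refine Finset.mem_erase.mpr ⟨hnα m hm, ?_⟩
          have hlt : t*c + m < N := hjN m hm
          have hb : base + m = q*N + (t*c + m) := by rw [hbase]; ring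
          rw [hb]
          exact hD _ (le_trans (by omega : k ≤ s) (hPD _ hlt).1) (hPD _ hlt).2
        have herase : (C.erase α).card ≤ 1 := by
          rw [Finset.card_erase_of_mem hαC]
          omega
        have hcol : ∀ m, m < c → f (PP N s hN1 hs1 (base + m)) = f (PP N s hN1 hs1 base) := by
          intro m hm
          have h0 : f (PP N s hN1 hs1 (base + 0)) ∈ C.erase α := hmemC 0 (by omega)
          rw [show base + 0 = base from rfl] at h0
          exact Finset.card_le_one.mp herase _ (hmemC m hm) _ h0
        have hbound : base + c ≤ N^s := by
          have h1 : t*c + c ≤ N := by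
            have : (t+1)*c ≤ (c+1)*c := Nat.mul_le_mul_right _ (by omega)
            rw [add_mul, one_mul] at this
            nlinarith
          have h2 : (q+1)*N ≤ N^k * N := Nat.mul_le_mul_right _ (by omega)
          rw [hsk, pow_succ]
          rw [add_mul, one_mul] at h2
          omega
        have hmod : ∀ m, m + 1 < c → (base + m + 1) % N ≠ 0 := by
          intro m hm
          have hr : t*c + m + 1 < N := by
            have : t*c ≤ c*c := Nat.mul_le_mul_right _ (by omega)
            omega
          rw [show base + m + 1 = (t*c + m + 1) + q*N from by rw [hbase]; ring,
            Nat.add_mul_mod_self_right, Nat.mod_eq_of_lt hr]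
          omega
        have hrun := run_mono N s hN1 hs1 f base c hbound hmod hcol
        refine ⟨PP N s hN1 hs1 base, ?_⟩
        set F := (Finset.range c).image (fun m => PP N s hN1 hs1 (base + m)) with hF
        have hinj : Set.InjOn (fun m => PP N s hN1 hs1 (base + m)) (Finset.range c) := by
          intro m hm m' hm' he
          have hm1 : m < c := by simpa using hm
          have hm2 : m' < c := by simpa using hm'
          have hb1 : base + m < N^s := by omega
          have hb2 : base + m' < N^s := by omega
          have := congrArg PV.pos he
          rw [pos_PP hb1, pos_PP hb2] at this
          omega
        have hcard : c ≤ F.card := by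
          rw [hF, Finset.card_image_of_injOn hinj, Finset.card_range]
        refine le_trans hcard (card_le_mono ?_)
        intro x hx
        obtain ⟨m, hm, rfl⟩ := Finset.mem_image.mp hx
        exact hrun m (Finset.mem_range.mp hm)
    · -- STEP CASE: d ≥ 1
      by_cases hEx : ∃ i, i < N ∧ ∀ v : PV N s,
          (k+1 ≤ v.lvl ∧ v.pos / N^(v.lvl - (k+1)) = q*N + i) → f v ≠ α
      · obtain ⟨i, hiN, hni⟩ := hEx
        refine ih hd1 (k+1) (q*N+i) (C.erase α) (by omega) (by omega)
          (child_bound hq hiN) ?_ ?_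
        · intro v h1 h2
          refine Finset.mem_erase.mpr ⟨hni v ⟨h1, h2⟩, ?_⟩
          refine hD v (by omega) ?_
          have := child_div (q := q) (i := i) (p := v.pos) (L := v.lvl - k)
            (by omega) hiN (by omega) (by rwa [show v.lvl - k - 1 = v.lvl - (k+1) from by omega])
          exact this
        · rw [Finset.card_erase_of_mem hαC]; omega
      · push_neg at hEx
        refine ⟨u, ?_⟩
        choose g hg1 hg2 using hEx
        set F := insert u ((Finset.range N).attach.image
          (fun i => g i.1 (Finset.mem_range.mp i.2))) with hF
        have hinj : Set.InjOn (fun i : {x // x ∈ Finset.range N} => g i.1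
            (Finset.mem_range.mp i.2)) (Finset.range N).attach := by
          intro i _ i' _ he
          have h1 := (hg1 i.1 (Finset.mem_range.mp i.2)).2
          have h2 := (hg1 i'.1 (Finset.mem_range.mp i'.2)).2
          apply Subtype.ext
          simp only at he
          rw [he] at h1
          omega
        have hnotmem : u ∉ (Finset.range N).attach.image
            (fun i => g i.1 (Finset.mem_range.mp i.2)) := by
          intro hmem
          obtain ⟨i, _, he⟩ := Finset.mem_image.mp hmem
          have h1 := (hg1 i.1 (Finset.mem_range.mp i.2)).1
          rw [he] at h1
          simp [hu] at h1
        have hcard : N + 1 ≤ F.card := by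
          rw [hF, Finset.card_insert_of_notMem hnotmem, Finset.card_image_of_injOn hinj,
            Finset.card_attach, Finset.card_range]
        have hcN : c ≤ N + 1 := by nlinarith
        refine le_trans (le_trans hcN hcard) (card_le_mono ?_)
        intro x hx
        rcases Finset.mem_insert.mp hx with rfl | hx
        · exact self_mem_monoComponent
        · obtain ⟨i, _, rfl⟩ := Finset.mem_image.mp hx
          have h1 := hg1 i.1 (Finset.mem_range.mp i.2)
          have h2 := hg2 i.1 (Finset.mem_range.mp i.2)
          refine adj_mem_monoComponent h2 ?_
          rw [hG, myG_adj]
          constructor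
          · intro he
            have := congrArg PV.lvl he
            simp [hu] at this
            omega
          · refine Or.inr (Or.inr (Or.inl ?_))
            refine ⟨by simp [hu]; omega, ?_⟩
            have := child_div (q := q) (i := i.1) (p := (g i.1 (Finset.mem_range.mp i.2)).pos)
              (L := (g i.1 (Finset.mem_range.mp i.2)).lvl - k)
              (by omega) (Finset.mem_range.mp i.2) (by omega)
              (by rw [show (g i.1 (Finset.mem_range.mp i.2)).lvl - k - 1
                    = (g i.1 (Finset.mem_range.mp i.2)).lvl - (k+1) from by omega]
                  exact h1.2)
            simp [hu]
            rw [this]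

theorem myG_color (N s c : ℕ) (hc : 1 ≤ c) (hs : 1 ≤ s) (hNc : c*c + c ≤ N)
    (f : PV N s → Fin s) : ∃ w, c ≤ (monoComponent (myG N s) f w).ncard := by
  have hN1 : 1 ≤ N := by nlinarith
  have hcN : c ≤ N := by nlinarith
  rcases eq_or_lt_of_le hs with h1 | h2
  · -- s = 1 : the graph is a path on N vertices, one color
    subst h1
    have hbound : (0:ℕ) + N ≤ N^1 := by rw [pow_one]; omega
    have hmod : ∀ m, m + 1 < N → ((0:ℕ) + m + 1) % N ≠ 0 := by
      intro m hm
      rw [Nat.mod_eq_of_lt (by omega)]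
      omega
    have hcol : ∀ m, m < N → f (PP N 1 hN1 le_rfl (0 + m)) = f (PP N 1 hN1 le_rfl 0) :=
      fun m _ => Subsingleton.elim _ _
    have hrun := run_mono N 1 hN1 le_rfl f 0 N hbound hmod hcol
    refine ⟨PP N 1 hN1 le_rfl 0, ?_⟩
    set F := (Finset.range N).image (fun m => PP N 1 hN1 le_rfl (0 + m)) with hF
    have hinj : Set.InjOn (fun m => PP N 1 hN1 le_rfl (0 + m)) (Finset.range N) := by
      intro m hm m' hm' he
      have hm1 : (0:ℕ) + m < N^1 := by rw [pow_one]; simp at hm; omega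
      have hm2 : (0:ℕ) + m' < N^1 := by rw [pow_one]; simp at hm'; omega
      have := congrArg PV.pos he
      rw [pos_PP hm1, pos_PP hm2] at this
      omega
    have hcard : c ≤ F.card := by
      rw [hF, Finset.card_image_of_injOn hinj, Finset.card_range]
      omega
    refine le_trans hcard (card_le_mono ?_)
    intro x hx
    obtain ⟨m, hm, rfl⟩ := Finset.mem_image.mp hx
    exact hrun m (Finset.mem_range.mp hm)
  · -- s ≥ 2
    refine main_ind N s c hc hNc f (s-1) (by omega) 1 0 Finset.univ le_rfl (by omega)
      (by rw [pow_one]; omega) (fun v _ _ => Finset.mem_univ _) ?_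
    rw [Finset.card_univ, Fintype.card_fin]
    omega


theorem myG_nocopy (N s : ℕ) (hs : 1 ≤ s) :
    ¬ HasSubgraphCopy (myG N s) (completeBipartiteGraph (Fin s) (Fin (s+2))) := by
  rintro ⟨F, hF⟩
  set r : Fin s → PV N s := fun i => F (Sum.inl i) with hr
  set b : Fin (s+2) → PV N s := fun j => F (Sum.inr j) with hb
  have hadj : ∀ i j, (myG N s).Adj (r i) (b j) := fun i j => hF _ _ (by simp)
  have hbinj : Function.Injective b := by
    intro j j' h
    have := F.injective h
    simpa using this
  have hrinj : Function.Injective r := by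
    intro i i' h
    have := F.injective h
    simpa using this
  -- Step 1: all rows are at level < s
  have step1 : ∀ i, (r i).lvl < s := by
    intro i
    by_contra hcon
    have hlv : (r i).lvl = s := le_antisymm ((r i).lvl_le) (by omega)
    have hcases : ∀ j, ((b j).lvl = s ∧ (b j).pos = (r i).pos + 1) ∨
        ((b j).lvl = s ∧ (r i).pos = (b j).pos + 1) ∨ prel (b j) (r i) := by
      intro j
      have := (myG_adj.mp (hadj i j)).2
      rcases this with h | h | h | h
      · exfalso; have := (b j).lvl_le; have := h.1; omega
      · exact Or.inl ⟨h.2.1, h.2.2.1⟩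
      · exact Or.inr (Or.inr h)
      · exact Or.inr (Or.inl ⟨h.1, h.2.2.1⟩)
    have hφinj : Function.Injective (fun j : Fin (s+2) =>
        if (b j).lvl = s ∧ (b j).pos = (r i).pos + 1 then (⟨0, by omega⟩ : Fin (s+1))
        else if (b j).lvl = s ∧ (r i).pos = (b j).pos + 1 then ⟨s, by omega⟩
        else ⟨(b j).lvl, by have := (b j).lvl_le; omega⟩) := by
      intro j j' he
      simp only at he
      by_cases h1 : (b j).lvl = s ∧ (b j).pos = (r i).pos + 1
      · by_cases h1' : (b j').lvl = s ∧ (b j').pos = (r i).pos + 1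
        · exact hbinj (PV.ext' (h1.1.trans h1'.1.symm) (by omega))
        · exfalso
          rw [if_pos h1, if_neg h1'] at he
          by_cases h2' : (b j').lvl = s ∧ (r i).pos = (b j').pos + 1
          · rw [if_pos h2'] at he
            have := congrArg Fin.val he
            simp at this
            omega
          · rw [if_neg h2'] at he
            have := congrArg Fin.val he
            simp only [Fin.val_mk] at this
            have := (b j').one_le_lvl
            omega
      · by_cases h2 : (b j).lvl = s ∧ (r i).pos = (b j).pos + 1
        · by_cases h1' : (b j').lvl = s ∧ (b j').pos = (r i).pos + 1
          · exfalso
            rw [if_neg h1, if_pos h2, if_pos h1'] at he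
            have := congrArg Fin.val he
            simp at this
            omega
          · by_cases h2' : (b j').lvl = s ∧ (r i).pos = (b j').pos + 1
            · exact hbinj (PV.ext' (h2.1.trans h2'.1.symm) (by omega))
            · exfalso
              rw [if_neg h1, if_pos h2, if_neg h1', if_neg h2'] at he
              have hval := congrArg Fin.val he
              simp only [Fin.val_mk] at hval
              have hp' : prel (b j') (r i) := ((hcases j').resolve_left h1').resolve_left h2'
              have := hp'.1
              omega
        · have hp : prel (b j) (r i) := ((hcases j).resolve_left h1).resolve_left h2
          by_cases h1' : (b j').lvl = s ∧ (b j').pos = (r i).pos + 1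
          · exfalso
            rw [if_neg h1, if_neg h2, if_pos h1'] at he
            have := congrArg Fin.val he
            simp only [Fin.val_mk] at this
            have := (b j).one_le_lvl
            omega
          · by_cases h2' : (b j').lvl = s ∧ (r i).pos = (b j').pos + 1
            · exfalso
              rw [if_neg h1, if_neg h2, if_neg h1', if_pos h2'] at he
              have := congrArg Fin.val he
              simp only [Fin.val_mk] at this
              have := hp.1
              omega
            · have hp' : prel (b j') (r i) := ((hcases j').resolve_left h1').resolve_left h2'
              rw [if_neg h1, if_neg h2, if_neg h1', if_neg h2'] at he
              have hval := congrArg Fin.val he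
              simp only [Fin.val_mk] at hval
              exact hbinj (eq_of_common hp hp' hval)
    have := Fintype.card_le_of_injective _ hφinj
    simp at this
  -- Step 2: rows are pairwise comparable
  have step2 : ∀ i i', i ≠ i' → prel (r i) (r i') ∨ prel (r i') (r i) := by
    intro i i' hne
    by_contra hcomp
    push_neg at hcomp
    obtain ⟨hc1, hc2⟩ := hcomp
    have hcases : ∀ j, prel (b j) (r i) ∧ prel (b j) (r i') := by
      intro j
      have hA : ∀ i₀ : Fin s, prel (r i₀) (b j) ∨ prel (b j) (r i₀) := by
        intro i₀
        have := (myG_adj.mp (hadj i₀ j)).2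
        rcases this with h | h | h | h
        · exact Or.inl h
        · exfalso; have := h.1; have := step1 i₀; omega
        · exact Or.inr h
        · exfalso; have := h.2.1; have := step1 i₀; omega
      rcases hA i with h | h
      · rcases hA i' with h' | h'
        · -- both rows prefixes of b j : they are comparable
          exfalso
          rcases Nat.lt_trichotomy (r i).lvl (r i').lvl with hl | hl | hl
          · exact hc1 (prel_of_common h h' hl)
          · exact hne (hrinj (eq_of_common h h' hl))
          · exact hc2 (prel_of_common h' h hl)
        · exact absurd (prel_trans h h') hc1
      · rcases hA i' with h' | h'
        · exact absurd (prel_trans h' h) hc2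
        · exact ⟨h, h'⟩
    have hφinj : Function.Injective (fun j : Fin (s+2) =>
        (⟨(b j).lvl, by have := (b j).lvl_le; omega⟩ : Fin (s+1))) := by
      intro j j' he
      have hval := congrArg Fin.val he
      simp only [Fin.val_mk] at hval
      exact hbinj (eq_of_common (hcases j).1 (hcases j').1 hval)
    have := Fintype.card_le_of_injective _ hφinj
    simp at this
  -- Step 3: levels of rows are distinct values in [1, s-1] : contradiction
  have hφinj : Function.Injective (fun i : Fin s =>
      (⟨(r i).lvl - 1, by have h1 := (r i).one_le_lvl; have h2 := step1 i; omega⟩ :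
        Fin (s-1))) := by
    intro i i' he
    by_contra hne
    have hval := congrArg Fin.val he
    simp only [Fin.val_mk] at hval
    have h1 := (r i).one_le_lvl
    have h1' := (r i').one_le_lvl
    have hll : (r i).lvl = (r i').lvl := by omega
    rcases step2 i i' hne with h | h
    · have := h.1; omega
    · have := h.1; omega
  have := Fintype.card_le_of_injective _ hφinj
  simp at this
  omega


theorem div_eq_iff'' (t m p : ℕ) (hm : 0 < m) : t / m = p ↔ p * m ≤ t ∧ t < (p+1)*m := by
  constructor
  · rintro rfl
    refine ⟨Nat.div_mul_le_self t m, ?_⟩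
    have h1 := Nat.div_add_mod t m
    have h2 := Nat.mod_lt t hm
    have h4 : (t/m+1)*m = t/m*m + m := by ring
    have h3 : m*(t/m) = t/m*m := Nat.mul_comm _ _
    omega
  · rintro ⟨h1, h2⟩; exact Nat.div_eq_of_lt_le h1 h2

theorem myG_tw (N s : ℕ) (hN1 : 1 ≤ N) (hs : 1 ≤ s) : TreewidthAtMost (myG N s) s := by
  have hM : 1 ≤ N^s := Nat.one_le_pow _ _ (by omega)
  set M := N^s with hMdef
  set X : Fin M → Set (PV N s) := fun t =>
    {v | v.pos = t.val / N^(s - v.lvl)} ∪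
    {v | v.lvl = s ∧ v.pos + 1 = t.val ∧ t.val % N ≠ 0} with hX
  refine ⟨Fin M, pathGraph M, X, ?_, ?_, ?_, ?_⟩
  · -- tree
    haveI : Nonempty (Fin M) := ⟨⟨0, by omega⟩⟩
    exact ⟨⟨pathGraph_preconnected M⟩, isAcyclic_pathGraph M⟩
  · -- vertex bags form subtrees
    intro v
    have hvM : v.pos < M := lt_of_lt_of_le v.pos_lt (Nat.pow_le_pow_right hN1 v.lvl_le)
    by_cases hl : v.lvl = s
    · by_cases hmod : (v.pos + 1) % N ≠ 0
      · have hset : {i | v ∈ X i} = {t : Fin M | v.pos ≤ t.val ∧ t.val < v.pos + 2} := by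
          ext t
          simp only [hX, Set.mem_setOf_eq, Set.mem_union, hl, Nat.sub_self, pow_zero,
            Nat.div_one]
          constructor
          · rintro (h | ⟨_, h2, _⟩) <;> omega
          · intro ⟨h1, h2⟩
            rcases Nat.lt_or_ge t.val (v.pos + 1) with h | h
            · left; omega
            · right
              refine ⟨trivial, by omega, ?_⟩
              rwa [show t.val = v.pos + 1 from by omega]
        rw [hset]
        exact induced_interval_connected M v.pos (v.pos + 2) (by omega) hvM
      · push_neg at hmod
        have hset : {i | v ∈ X i} = {t : Fin M | v.pos ≤ t.val ∧ t.val < v.pos + 1} := by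
          ext t
          simp only [hX, Set.mem_setOf_eq, Set.mem_union, hl, Nat.sub_self, pow_zero,
            Nat.div_one]
          constructor
          · rintro (h | ⟨_, h2, h3⟩)
            · omega
            · exfalso; apply h3; rwa [show t.val = v.pos + 1 from by omega]
          · intro ⟨h1, h2⟩; left; omega
        rw [hset]
        exact induced_interval_connected M v.pos (v.pos + 1) (by omega) hvM
    · have hls : v.lvl < s := lt_of_le_of_ne v.lvl_le hl
      have hpow : 0 < N^(s - v.lvl) := Nat.pow_pos (by omega)
      have hset : {i | v ∈ X i} =
          {t : Fin M | v.pos * N^(s - v.lvl) ≤ t.val ∧ t.val < (v.pos + 1) * N^(s - v.lvl)} := by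
        ext t
        simp only [hX, Set.mem_setOf_eq, Set.mem_union]
        constructor
        · rintro (h | ⟨h1, _, _⟩)
          · exact (div_eq_iff'' t.val _ _ hpow).mp h.symm
          · exact absurd h1 hl
        · intro h
          left
          exact ((div_eq_iff'' t.val _ _ hpow).mpr h).symm
      rw [hset]
      refine induced_interval_connected M _ _ ?_ ?_
      · have := (Nat.mul_lt_mul_right hpow).mpr (show v.pos < v.pos + 1 from by omega)
        omega
      · have h2 : (v.pos + 1) * N^(s - v.lvl) ≤ N^v.lvl * N^(s - v.lvl) :=
          Nat.mul_le_mul_right _ v.pos_lt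
        have h3 : N^v.lvl * N^(s - v.lvl) = N^s := by
          rw [← pow_add]; congr 1; omega
        have h4 : v.pos * N^(s - v.lvl) < (v.pos + 1) * N^(s - v.lvl) :=
          (Nat.mul_lt_mul_right hpow).mpr (by omega)
        omega
  · -- edges covered
    have key : ∀ u w : PV N s, (prel u w ∨ srel N u w) → ∃ i, u ∈ X i ∧ w ∈ X i := by
      rintro u w (h | h)
      · have hpow : 0 < N^(s - w.lvl) := Nat.pow_pos (by omega)
        have hbound : w.pos * N^(s - w.lvl) < M := by
          have h2 : (w.pos + 1) * N^(s - w.lvl) ≤ N^w.lvl * N^(s - w.lvl) :=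
            Nat.mul_le_mul_right _ w.pos_lt
          have h3 : N^w.lvl * N^(s - w.lvl) = N^s := by
            rw [← pow_add, show w.lvl + (s - w.lvl) = s from by have := w.lvl_le; omega]
          have h4 : w.pos * N^(s - w.lvl) < (w.pos + 1) * N^(s - w.lvl) :=
            (Nat.mul_lt_mul_right hpow).mpr (by omega)
          omega
        refine ⟨⟨w.pos * N^(s - w.lvl), hbound⟩, ?_, ?_⟩
        · left
          show u.pos = w.pos * N^(s - w.lvl) / N^(s - u.lvl)
          rw [show s - u.lvl = (s - w.lvl) + (w.lvl - u.lvl) from by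
              have := h.1; have := w.lvl_le; omega,
            ← div_pow_add, Nat.mul_div_cancel _ hpow]
          exact h.2
        · left
          show w.pos = w.pos * N^(s - w.lvl) / N^(s - w.lvl)
          rw [Nat.mul_div_cancel _ hpow]
      · have hbound : w.pos < M := lt_of_lt_of_le w.pos_lt (Nat.pow_le_pow_right hN1 w.lvl_le)
        refine ⟨⟨w.pos, hbound⟩, ?_, ?_⟩
        · right
          exact ⟨h.1, by show u.pos + 1 = w.pos; have := h.2.2.1; omega, by
            show w.pos % N ≠ 0
            rw [h.2.2.1]
            exact h.2.2.2⟩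
        · left
          show w.pos = w.pos / N^(s - w.lvl)
          rw [show s - w.lvl = 0 from by have := h.2.1; omega, pow_zero, Nat.div_one]
    intro u w hadj
    rcases (myG_adj.mp hadj).2 with h | h | h | h
    · exact key u w (Or.inl h)
    · exact key u w (Or.inr h)
    · obtain ⟨i, h1, h2⟩ := key w u (Or.inl h); exact ⟨i, h2, h1⟩
    · obtain ⟨i, h1, h2⟩ := key w u (Or.inr h); exact ⟨i, h2, h1⟩
  · -- bag sizes
    intro t
    set g : ℕ → PV N s := fun k =>
      if h : 1 ≤ k ∧ k ≤ s ∧ t.val / N^(s-k) < N^k then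
        mkPV N s k (t.val / N^(s-k)) hN1 h.1 h.2.1 h.2.2
      else mkPV N s 1 0 hN1 le_rfl hs (by rw [pow_one]; omega) with hg
    have hsub1 : {v : PV N s | v.pos = t.val / N^(s - v.lvl)} ⊆
        g '' ↑(Finset.Icc 1 s) := by
      intro v hv
      refine ⟨v.lvl, by simp [Finset.mem_Icc, v.one_le_lvl, v.lvl_le], ?_⟩
      have hcond : 1 ≤ v.lvl ∧ v.lvl ≤ s ∧ t.val / N^(s - v.lvl) < N^v.lvl :=
        ⟨v.one_le_lvl, v.lvl_le, by rw [← hv]; exact v.pos_lt⟩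
      rw [hg]
      simp only [dif_pos hcond]
      exact PV.ext' (by simp) (by simp; exact hv.symm)
    have hsub2 : ({v : PV N s | v.lvl = s ∧ v.pos + 1 = t.val ∧ t.val % N ≠ 0}).ncard ≤ 1 := by
      rcases Set.eq_empty_or_nonempty
        {v : PV N s | v.lvl = s ∧ v.pos + 1 = t.val ∧ t.val % N ≠ 0} with h | ⟨x, hx⟩
      · simp [h]
      · have hsub : {v : PV N s | v.lvl = s ∧ v.pos + 1 = t.val ∧ t.val % N ≠ 0} ⊆ {x} := by
          intro y hy
          have : y = x := PV.ext' (by rw [hy.1, hx.1]) (by have := hy.2.1; have := hx.2.1; omega)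
          simp [this]
        calc _ ≤ ({x} : Set (PV N s)).ncard := Set.ncard_le_ncard hsub (Set.finite_singleton x)
        _ = 1 := Set.ncard_singleton x
    calc (X t).ncard ≤ ({v : PV N s | v.pos = t.val / N^(s - v.lvl)}).ncard
          + ({v : PV N s | v.lvl = s ∧ v.pos + 1 = t.val ∧ t.val % N ≠ 0}).ncard :=
        Set.ncard_union_le _ _
      _ ≤ (↑(Finset.Icc 1 s) : Set ℕ).ncard + 1 :=
          Nat.add_le_add (le_trans (Set.ncard_le_ncard hsub1 (Set.toFinite _))
            (Set.ncard_image_le (Set.toFinite _))) hsub2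
      _ ≤ s + 1 := by
          rw [Set.ncard_coe_finset, Nat.card_Icc]
          omega

end Aux

/-- For all `s,c ∈ ℕ` there is a graph `G` with treewidth at most `s` and no `K_{s,s+2}`
subgraph such that every coloring of `G` with at most `s` colors has a monochromatic component
with at least `c` vertices. -/
theorem stmt10 (s c : ℕ) (hs : 0 < s) (hc : 0 < c) :
    ∃ (V : Type) (_ : Fintype V) (G : SimpleGraph V),
      TreewidthAtMost G s ∧
      ¬ HasSubgraphCopy G (completeBipartiteGraph (Fin s) (Fin (s + 2))) ∧
      ∀ f : V → Fin s, ∃ v, c ≤ (monoComponent G f v).ncard := by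
  have hN1 : 1 ≤ c * c + c := by nlinarith
  exact ⟨PV (c*c+c) s, inferInstance, myG (c*c+c) s,
    myG_tw (c*c+c) s hN1 hs, myG_nocopy (c*c+c) s hs,
    fun f => myG_color (c*c+c) s c hc hs le_rfl f⟩
end

section
/- Let G be a graph, s,r ∈ ℕ, Y₁ ⊆ V(G), and let L be an (s,r,Y₁)-list-assignment of G. If W ⊆ V(G) and F is a set of colors with |F| ≤ r, then every (W,F)-progress L′ of L satisfies: (1) L′ is an (s,r,Y₁ ∪ W)-list-assignment of G; (2) L′(v) ⊆ L(v) for every v ∈ V(G); (3) {v ∈ Y₁ ∪ W : L′(v) ∩ F ≠ ∅} = {v ∈ Y₁ : L(v) ∩ F ≠ ∅}; (4) if N^{≥s}(Y₁) ⊆ W, then for every y ∈ Y₁ ∪ W and every color x ∈ F ∩ L′(y), no vertex v ∈ N_G(y) − (Y₁ ∪ W) has x ∈ L′(v); (5) for every v ∈ V(G) − (Y₁ ∪ W), L′(v) ∩ F = L(v) ∩ F. -/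
open SimpleGraph

/-- Basic properties of a `(W,F)`-progress of an `(s,r,Y₁)`-list-assignment. -/
theorem stmt12 {V : Type} [Fintype V] (G : SimpleGraph V) (s r : ℕ)
    (hs : 0 < s) (hr : 0 < r)
    (Y1 : Set V) (L : V → Finset ℤ) (hL : IsSRYList G s r Y1 L)
    (W : Set V) (F : Finset ℤ) (hF : F.card ≤ r)
    (L' : V → Finset ℤ) (hL' : IsProgress G s Y1 L W F L') :
    IsSRYList G s r (Y1 ∪ W) L' ∧
    (∀ v, L' v ⊆ L v) ∧
    ({v | v ∈ Y1 ∪ W ∧ (L' v ∩ F).Nonempty} = {v | v ∈ Y1 ∧ (L v ∩ F).Nonempty}) ∧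
    (Nge G s Y1 ⊆ W →
      ∀ y ∈ Y1 ∪ W, ∀ x ∈ F ∩ L' y, ∀ w ∈ G.neighborSet y, w ∉ Y1 ∪ W → x ∉ L' w) ∧
    (∀ v, v ∉ Y1 ∪ W → L' v ∩ F = L v ∩ F) := by
  classical
  obtain ⟨hP1, hP2, hP3, hP4, hP5⟩ := hL
  obtain ⟨hQ1, hQ2, hQ3, hQ4⟩ := hL'
  -- (2): L' v ⊆ L v for all v
  have hsub : ∀ v, L' v ⊆ L v := by
    intro v
    by_cases hv1 : v ∈ Y1
    · rw [hQ1 v hv1]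
    by_cases hvW : v ∈ Y1 ∪ W
    · exact (hQ2 v ⟨hvW, hv1⟩).2.trans Finset.sdiff_subset
    by_cases hvN : v ∈ Nlt G s (Y1 ∪ W)
    · intro x hx
      have h := (hQ3 v hvN).1 (by exact_mod_cast hx)
      exact_mod_cast h.1
    · rw [hQ4 v hvW hvN]
  -- key structural facts for v ∈ Nlt G s (Y1 ∪ W)
  have key : ∀ v ∈ Nlt G s (Y1 ∪ W),
      (L v).card = s + r - (G.neighborSet v ∩ Y1).ncard ∧
      (G.neighborSet v ∩ Y1).ncard + (G.neighborSet v ∩ (W \ Y1)).ncard < s ∧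
      (G.neighborSet v ∩ (Y1 ∪ W)).ncard
        = (G.neighborSet v ∩ Y1).ncard + (G.neighborSet v ∩ (W \ Y1)).ncard := by
    intro v hv
    obtain ⟨hvout, _h1, h2⟩ := hv
    have hvY1 : v ∉ Y1 := fun h => hvout (Or.inl h)
    have hsplit : G.neighborSet v ∩ (Y1 ∪ W)
        = (G.neighborSet v ∩ Y1) ∪ (G.neighborSet v ∩ (W \ Y1)) := by
      ext u
      simp only [Set.mem_inter_iff, Set.mem_union, Set.mem_diff]
      tauto
    have hdisj : Disjoint (G.neighborSet v ∩ Y1) (G.neighborSet v ∩ (W \ Y1)) := by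
      rw [Set.disjoint_left]
      rintro u ⟨-, hu1⟩ ⟨-, -, hu2⟩
      exact hu2 hu1
    have hcardsum : (G.neighborSet v ∩ (Y1 ∪ W)).ncard
        = (G.neighborSet v ∩ Y1).ncard + (G.neighborSet v ∩ (W \ Y1)).ncard := by
      rw [hsplit, Set.ncard_union_eq hdisj]
    have hmn : (G.neighborSet v ∩ Y1).ncard + (G.neighborSet v ∩ (W \ Y1)).ncard < s := by
      omega
    refine ⟨?_, hmn, hcardsum⟩
    by_cases hm : (G.neighborSet v ∩ Y1).ncard = 0
    · have hempty : G.neighborSet v ∩ Y1 = ∅ := by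
        rwa [Set.ncard_eq_zero] at hm
      have hvC : v ∉ closedNbhd G Y1 := by
        rintro (h | ⟨u, hu, hadj⟩)
        · exact hvY1 h
        · have : u ∈ G.neighborSet v ∩ Y1 := ⟨hadj, hu⟩
          rw [hempty] at this
          exact this.elim
      rw [hP4 v hvC, hm]
      omega
    · have hm1 : 1 ≤ (G.neighborSet v ∩ Y1).ncard := Nat.one_le_iff_ne_zero.mpr hm
      have hvNlt : v ∈ Nlt G s Y1 := ⟨hvY1, hm1, by omega⟩
      exact (hP3 v hvNlt).1
  -- cardinality of L' on Nlt vertices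
  have hcardL' : ∀ v ∈ Nlt G s (Y1 ∪ W),
      (L' v).card = s + r - (G.neighborSet v ∩ (Y1 ∪ W)).ncard ∧
      r + 1 ≤ (L' v).card := by
    intro v hv
    obtain ⟨hc, hmn, hsum⟩ := key v hv
    have h3 := (hQ3 v hv).2.1
    constructor <;> omega
  -- (5): preservation of L v ∩ F off Y1 ∪ W
  have hC5 : ∀ v, v ∉ Y1 ∪ W → L' v ∩ F = L v ∩ F := by
    intro v hv
    by_cases hvN : v ∈ Nlt G s (Y1 ∪ W)
    swap
    · rw [hQ4 v hv hvN]
    obtain ⟨hcardL, hmn, _⟩ := key v hvN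
    obtain ⟨hsub3, hcard3, hmax3⟩ := hQ3 v hvN
    have hfin : (G.neighborSet v ∩ (W \ Y1)).Finite := Set.toFinite _
    set T : Finset ℤ := hfin.toFinset.biUnion (fun w => L' w) with hT
    have hTco : (⋃ w ∈ G.neighborSet v ∩ (W \ Y1), (L' w : Set ℤ)) = (T : Set ℤ) := by
      ext x
      simp only [hT, Set.mem_iUnion, exists_prop, Finset.mem_coe, Finset.mem_biUnion,
        Set.Finite.mem_toFinset]
    have hTF : ∀ x ∈ T, x ∉ F := by
      intro x hx
      rw [hT, Finset.mem_biUnion] at hx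
      obtain ⟨w, hw, hxw⟩ := hx
      rw [Set.Finite.mem_toFinset] at hw
      have hw2 : w ∈ (Y1 ∪ W) \ Y1 := ⟨Or.inr hw.2.1, hw.2.2⟩
      exact (Finset.mem_sdiff.mp ((hQ2 w hw2).2 hxw)).2
    have hTcard : T.card ≤ (G.neighborSet v ∩ (W \ Y1)).ncard := by
      calc T.card ≤ ∑ w ∈ hfin.toFinset, (L' w).card := Finset.card_biUnion_le
        _ = ∑ w ∈ hfin.toFinset, 1 := by
            refine Finset.sum_congr rfl fun w hw => ?_
            rw [Set.Finite.mem_toFinset] at hw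
            exact (hQ2 w ⟨Or.inr hw.2.1, hw.2.2⟩).1
        _ = hfin.toFinset.card := by simp
        _ = (G.neighborSet v ∩ (W \ Y1)).ncard := (Set.ncard_eq_toFinset_card _ hfin).symm
    have hLF_sub : L v ∩ F ⊆ L v \ T := by
      intro x hx
      rw [Finset.mem_inter] at hx
      exact Finset.mem_sdiff.mpr ⟨hx.1, fun hxT => hTF x hxT hx.2⟩
    have hCcard : (L v).card - (G.neighborSet v ∩ (W \ Y1)).ncard ≤ (L v \ T).card := by
      have := Finset.le_card_sdiff T (L v)
      omega
    have hLFcard : (L v ∩ F).card ≤ (L v).card - (G.neighborSet v ∩ (W \ Y1)).ncard := by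
      have h1 : (L v ∩ F).card ≤ F.card := Finset.card_le_card Finset.inter_subset_right
      omega
    obtain ⟨S, hS1, hS2, hS3⟩ := Finset.exists_subsuperset_card_eq hLF_sub hLFcard hCcard
    have hSF : S ∩ F = L v ∩ F := by
      apply Finset.Subset.antisymm
      · intro x hx
        rw [Finset.mem_inter] at hx ⊢
        exact ⟨(Finset.mem_sdiff.mp (hS2 hx.1)).1, hx.2⟩
      · intro x hx
        rw [Finset.mem_inter] at hx ⊢
        exact ⟨hS1 (Finset.mem_inter.mpr hx), hx.2⟩
    have hmax := hmax3 S (by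
      rw [hTco]
      intro x hx
      have := hS2 (by exact_mod_cast hx)
      rw [Finset.mem_sdiff] at this
      exact ⟨by exact_mod_cast this.1, by exact_mod_cast this.2⟩) hS3
    rw [hSF] at hmax
    exact Finset.eq_of_subset_of_card_le
      (Finset.inter_subset_inter (hsub v) Finset.Subset.rfl) hmax
  -- L' v ∩ F = ∅ on (Y1 ∪ W) \ Y1
  have hWF : ∀ v ∈ (Y1 ∪ W) \ Y1, L' v ∩ F = ∅ := by
    intro v hv
    apply Finset.eq_empty_of_forall_notMem
    intro x hx
    rw [Finset.mem_inter] at hx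
    exact (Finset.mem_sdiff.mp ((hQ2 v hv).2 hx.1)).2 hx.2
  -- (3)
  have hC3 : {v | v ∈ Y1 ∪ W ∧ (L' v ∩ F).Nonempty} = {v | v ∈ Y1 ∧ (L v ∩ F).Nonempty} := by
    ext v
    simp only [Set.mem_setOf_eq]
    constructor
    · rintro ⟨hvYW, hne⟩
      by_cases hv1 : v ∈ Y1
      · exact ⟨hv1, by rwa [hQ1 v hv1] at hne⟩
      · rw [hWF v ⟨hvYW, hv1⟩] at hne
        exact absurd hne (by simp)
    · rintro ⟨hv1, hne⟩
      exact ⟨Or.inl hv1, by rwa [hQ1 v hv1]⟩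
  -- (1) components
  have hP2' : Y1 ∪ W = {v | (L' v).card = 1} := by
    ext v
    simp only [Set.mem_setOf_eq, Set.mem_union]
    constructor
    · intro h
      by_cases hv1 : v ∈ Y1
      · rw [hQ1 v hv1]
        have := hP2 ▸ hv1
        exact this
      · rcases h with h | h
        · exact absurd h hv1
        · exact (hQ2 v ⟨Or.inr h, hv1⟩).1
    · intro h
      by_contra hv
      rw [not_or] at hv
      have hvYW : v ∉ Y1 ∪ W := by
        rintro (h' | h')
        exacts [hv.1 h', hv.2 h']
      by_cases hvN : v ∈ Nlt G s (Y1 ∪ W)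
      · have := (hcardL' v hvN).2
        omega
      · rw [hQ4 v hvYW hvN] at h
        exact hv.1 (hP2 ▸ h)
  have hP1' : ∀ v, 1 ≤ (L' v).card ∧ (L' v).card ≤ s + r := by
    intro v
    by_cases hv1 : v ∈ Y1
    · rw [hQ1 v hv1]; exact hP1 v
    by_cases hvW : v ∈ Y1 ∪ W
    · have := (hQ2 v ⟨hvW, hv1⟩).1
      omega
    by_cases hvN : v ∈ Nlt G s (Y1 ∪ W)
    · obtain ⟨h1, h2⟩ := hcardL' v hvN
      constructor <;> omega
    · rw [hQ4 v hvW hvN]; exact hP1 v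
  have hP5' : ∀ v, v ∉ Y1 ∪ W → r + 1 ≤ (L' v).card := by
    intro v hv
    by_cases hvN : v ∈ Nlt G s (Y1 ∪ W)
    · exact (hcardL' v hvN).2
    · rw [hQ4 v hv hvN]
      exact hP5 v (fun h => hv (Or.inl h))
  have hP3' : ∀ y ∈ Nlt G s (Y1 ∪ W),
      (L' y).card = s + r - (G.neighborSet y ∩ (Y1 ∪ W)).ncard ∧
      ∀ u ∈ G.neighborSet y ∩ (Y1 ∪ W), Disjoint (L' y) (L' u) := by
    intro y hy
    refine ⟨(hcardL' y hy).1, ?_⟩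
    rintro u ⟨hadj, huYW⟩
    have hyout : y ∉ Y1 ∪ W := hy.1
    have hyY1 : y ∉ Y1 := fun h => hyout (Or.inl h)
    by_cases hu1 : u ∈ Y1
    · -- u ∈ Y1: use (L3) for L
      have hm1 : 1 ≤ (G.neighborSet y ∩ Y1).ncard := by
        rw [Nat.one_le_iff_ne_zero, Ne, Set.ncard_eq_zero]
        intro hemp
        have : u ∈ G.neighborSet y ∩ Y1 := ⟨hadj, hu1⟩
        rw [hemp] at this
        exact this
      obtain ⟨_, hmn, _⟩ := key y hy
      have hyNlt : y ∈ Nlt G s Y1 := ⟨hyY1, hm1, by omega⟩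
      have hd := (hP3 y hyNlt).2 u ⟨hadj, hu1⟩
      rw [hQ1 u hu1]
      exact hd.mono_left (hsub y)
    · -- u ∈ W \ Y1: use the progress subset condition
      have huW : u ∈ W := by
        rcases huYW with h | h
        exacts [absurd h hu1, h]
      rw [Finset.disjoint_left]
      intro x hx hxu
      have h := (hQ3 y hy).1 (by exact_mod_cast hx)
      apply h.2
      exact Set.mem_biUnion (⟨hadj, huW, hu1⟩ : u ∈ G.neighborSet y ∩ (W \ Y1))
        (by exact_mod_cast hxu)
  have hP4' : ∀ v, v ∉ closedNbhd G (Y1 ∪ W) → (L' v).card = s + r := by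
    intro v hv
    have hv1 : v ∉ Y1 ∪ W := fun h => hv (Or.inl h)
    have hv2 : ¬ ∃ u ∈ Y1 ∪ W, G.Adj v u := fun h => hv (Or.inr h)
    have hvN : v ∉ Nlt G s (Y1 ∪ W) := by
      rintro ⟨-, h1, -⟩
      rw [Nat.one_le_iff_ne_zero, Ne, Set.ncard_eq_zero] at h1
      apply h1
      ext u
      simp only [Set.mem_inter_iff, Set.mem_empty_iff_false, iff_false, not_and]
      intro hadj hu
      exact hv2 ⟨u, hu, hadj⟩
    rw [hQ4 v hv1 hvN]
    apply hP4
    rintro (h | ⟨u, hu, hadj⟩)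
    · exact hv1 (Or.inl h)
    · exact hv2 ⟨u, Or.inl hu, hadj⟩
  refine ⟨⟨hP1', hP2', hP3', hP4', hP5'⟩, hsub, hC3, ?_, hC5⟩
  -- (4)
  intro hNge y hy x hx w hw hwout
  rw [Finset.mem_inter] at hx
  have hyY1 : y ∈ Y1 := by
    by_contra hy1
    have := hWF y ⟨hy, hy1⟩
    have : x ∈ (∅ : Finset ℤ) := this ▸ Finset.mem_inter.mpr ⟨hx.2, hx.1⟩
    simp at this
  have hxLy : x ∈ L y := by
    rw [← hQ1 y hyY1]; exact hx.2
  have hwY1 : w ∉ Y1 := fun h => hwout (Or.inl h)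
  have hywmem : y ∈ G.neighborSet w ∩ Y1 := ⟨(G.adj_symm hw : G.Adj w y), hyY1⟩
  have hm1 : 1 ≤ (G.neighborSet w ∩ Y1).ncard := by
    rw [Nat.one_le_iff_ne_zero, Ne, Set.ncard_eq_zero]
    intro hemp
    rw [hemp] at hywmem
    exact hywmem
  have hms : (G.neighborSet w ∩ Y1).ncard < s := by
    by_contra h
    push_neg at h
    exact hwout (Or.inr (hNge ⟨hwY1, h⟩))
  have hd := (hP3 w ⟨hwY1, hm1, hms⟩).2 y hywmem
  intro hxw
  exact Finset.disjoint_left.mp hd (hsub w hxw) hxLy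
end

section
/- For all s,t,θ,η,r ∈ ℕ with η ≥ 9θ+1 and for every nondecreasing function g : ℕ₀ → ℕ₀, if G is a graph with no K_{s,t} subgraph, Y₁ ⊆ V(G) with 9θ+1 ≤ |Y₁| ≤ η, F is a set of colors with |F| ≤ r, and L is an (s,r,Y₁)-list-assignment of G such that for every x ∈ F the set {y ∈ Y₁ : x ∈ L(y)} is a stable set in G, then at least one of the following holds: (1) there exists an (η,g)-bounded L-coloring of G such that for every x ∈ F the set of vertices colored x is a stable set in G; (2) there exist an induced subgraph G′ of G with |V(G′)| < |V(G)|, a subset Y₁′ of V(G′) with |Y₁′| ≤ η, and an (s,r,Y₁′)-list-assignment L′ of G′ such that (a) L′(v) ⊆ L(v) for every v ∈ V(G′), (b) there is no (η,g)-bounded L′-coloring of G′ in which for every x ∈ F the vertices colored x form a stable set in G′, (c) {v ∈ Y₁ : F ∩ L(v) ≠ ∅} ∩ V(G′) = {v ∈ Y₁′ : F ∩ L′(v) ≠ ∅}, and (d) L′(v) ∩ F = L(v) ∩ F for every v ∈ V(G′) − Y₁′; or (3) the set 𝒯 = {(A,B) : (A,B) a separation of G with |V(A ∩ B)| < θ and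 |V(A) ∩ Y₁| ≤ 3θ} is a tangle of order θ in G. -/
open SimpleGraph

/-! ## Auxiliary lemmas -/

section Helpers

variable {V : Type*} {α : Type*}

lemma aux_walk_down {G : SimpleGraph V} {T : Set V} {a b : ↥T} (p : (G.induce T).Walk a b) :
    ∃ q : G.Walk ↑a ↑b, ∀ x ∈ q.support, x ∈ T := by
  induction p with
  | nil => exact ⟨SimpleGraph.Walk.nil, by simp⟩
  | cons h p ih =>
    obtain ⟨q, hq⟩ := ih
    refine ⟨SimpleGraph.Walk.cons (comap_adj.mp h) q, ?_⟩
    intro x hx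
    rw [SimpleGraph.Walk.support_cons, List.mem_cons] at hx
    rcases hx with h1 | h2
    · subst h1; exact Subtype.coe_prop _
    · exact hq x h2

lemma aux_walk_up {G : SimpleGraph V} {T : Set V} : ∀ {u v : V} (p : G.Walk u v)
    (_ : ∀ x ∈ p.support, x ∈ T) (hu : u ∈ T) (hv : v ∈ T),
    Nonempty ((G.induce T).Walk ⟨u, hu⟩ ⟨v, hv⟩) := by
  intro u v p
  induction p with
  | nil => intro _ hu hv; exact ⟨SimpleGraph.Walk.nil⟩
  | @cons u x v h p ih =>
    intro hs hu hv
    have hx : x ∈ T := hs x (by simp)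
    obtain ⟨q⟩ := ih (fun y hy => hs y (by simp [hy])) hx hv
    exact ⟨SimpleGraph.Walk.cons (show (G.induce T).Adj ⟨u, hu⟩ ⟨x, hx⟩ from h) q⟩

lemma aux_mem_monoComponent {G : SimpleGraph V} {c : V → α} {w v : V} :
    v ∈ monoComponent G c w ↔ ∃ p : G.Walk w v, ∀ x ∈ p.support, c x = c w := by
  constructor
  · rintro ⟨v', hv', rfl⟩
    rw [SimpleGraph.ConnectedComponent.mem_supp_iff, SimpleGraph.ConnectedComponent.eq] at hv'
    obtain ⟨p⟩ := hv'.symm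
    obtain ⟨q, hq⟩ := aux_walk_down p
    exact ⟨q, fun x hx => hq x hx⟩
  · rintro ⟨p, hp⟩
    have hv : c v = c w := hp v (SimpleGraph.Walk.end_mem_support p)
    obtain ⟨q⟩ := aux_walk_up (T := {u | c u = c w}) p hp rfl hv
    refine ⟨⟨v, hv⟩, ?_, rfl⟩
    rw [SimpleGraph.ConnectedComponent.mem_supp_iff, SimpleGraph.ConnectedComponent.eq]
    exact ⟨q.reverse⟩

lemma aux_self_mem_monoComponent {G : SimpleGraph V} {c : V → α} {w : V} :
    w ∈ monoComponent G c w :=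
  aux_mem_monoComponent.mpr ⟨SimpleGraph.Walk.nil, by simp⟩

lemma aux_mem_monoComponent_of_adj {G : SimpleGraph V} {c : V → α} {w u v : V}
    (hu : u ∈ monoComponent G c w) (ha : G.Adj u v) (hc : c v = c u) :
    v ∈ monoComponent G c w := by
  obtain ⟨p, hp⟩ := aux_mem_monoComponent.mp hu
  refine aux_mem_monoComponent.mpr ⟨p.concat ha, ?_⟩
  intro x hx
  rw [SimpleGraph.Walk.support_concat] at hx
  rw [List.mem_append] at hx
  rcases hx with h1 | h2
  · exact hp x h1
  · simp at h2; subst h2; rw [hc]; exact hp u (SimpleGraph.Walk.end_mem_support p)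

lemma aux_mem_monoComponent_trans {G : SimpleGraph V} {c : V → α} {w u v : V}
    (h1 : u ∈ monoComponent G c w) (h2 : v ∈ monoComponent G c u) :
    v ∈ monoComponent G c w := by
  obtain ⟨p, hp⟩ := aux_mem_monoComponent.mp h1
  obtain ⟨q, hq⟩ := aux_mem_monoComponent.mp h2
  have hcu : c u = c w := hp u (SimpleGraph.Walk.end_mem_support p)
  refine aux_mem_monoComponent.mpr ⟨p.append q, ?_⟩
  intro z hz
  rcases (SimpleGraph.Walk.mem_support_append_iff p q).mp hz with h | h
  · exact hp z h
  · exact (hq z h).trans hcu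

lemma aux_support_mem_monoComponent {G : SimpleGraph V} {c : V → α} {w v : V}
    (p : G.Walk w v) (hp : ∀ x ∈ p.support, c x = c w) :
    ∀ x ∈ p.support, x ∈ monoComponent G c w := by
  classical
  intro x hx
  exact aux_mem_monoComponent.mpr ⟨p.takeUntil x hx,
    fun y hy => hp y (SimpleGraph.Walk.support_takeUntil_subset _ _ hy)⟩

end Helpers

section SepHelpers

variable {V : Type} {G : SimpleGraph V}

lemma aux_interior_nbr {A B : G.Subgraph} (hsup : A ⊔ B = ⊤) {v u : V}
    (hvB : v ∉ B.verts) (h : G.Adj v u) : u ∈ A.verts := by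
  have : (A ⊔ B).Adj v u := by rw [hsup]; exact h
  rcases this with h' | h'
  · exact h'.snd_mem
  · exact absurd h'.fst_mem hvB

lemma aux_verts_cover {A B : G.Subgraph} (hsup : A ⊔ B = ⊤) (v : V) :
    v ∈ A.verts ∪ B.verts := by
  have := congrArg SimpleGraph.Subgraph.verts hsup
  rw [SimpleGraph.Subgraph.verts_sup, SimpleGraph.Subgraph.verts_top] at this
  rw [this]; trivial

lemma aux_induce_adj {S : Set V} {a b : ↥S} (h : G.Adj ↑a ↑b) : (G.induce S).Adj a b := h

lemma aux_val_image_setOf {S W : Set V} :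
    Subtype.val '' {v : ↥S | ↑v ∈ W} = W ∩ S := by
  ext w
  constructor
  · rintro ⟨⟨w', hw'⟩, hmem, rfl⟩; exact ⟨hmem, hw'⟩
  · rintro ⟨hW, hS⟩; exact ⟨⟨w, hS⟩, hW, rfl⟩

lemma aux_ncard_setOf_val {S W : Set V} :
    ({v : ↥S | ↑v ∈ W}).ncard = (W ∩ S).ncard := by
  rw [← aux_val_image_setOf (S := S) (W := W)]
  exact (Set.ncard_image_of_injective _ Subtype.val_injective).symm

lemma aux_ncard_induce_nbr {S W : Set V} (v : ↥S) (hint : ∀ u, G.Adj ↑v u → u ∈ S) :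
    ((G.induce S).neighborSet v ∩ {u : ↥S | ↑u ∈ W}).ncard
      = (G.neighborSet (v : V) ∩ W).ncard := by
  rw [← Set.ncard_image_of_injective _ (Subtype.val_injective (p := fun x => x ∈ S))]
  congr 1
  ext u
  constructor
  · rintro ⟨⟨u', hu'⟩, ⟨ha, hw⟩, rfl⟩
    exact ⟨ha, hw⟩
  · rintro ⟨ha, hw⟩
    exact ⟨⟨u, hint u ha⟩, ⟨ha, hw⟩, rfl⟩

lemma aux_stay_side {A B : G.Subgraph} (hsup : A ⊔ B = ⊤) (c : V → ℤ)
    (cA : ↥A.verts → ℤ) (hcA : ∀ v : ↥A.verts, c ↑v = cA v) :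
    ∀ {w v : V} (p : G.Walk w v), (∀ z ∈ p.support, c z = c w) →
    (∀ z ∈ p.support, z ∉ A.verts ∩ B.verts) → ∀ hw : w ∈ A.verts,
    ∃ hv : v ∈ A.verts,
      (⟨v, hv⟩ : ↥A.verts) ∈ monoComponent (G.induce A.verts) cA ⟨w, hw⟩ := by
  intro w v p
  induction p with
  | nil => intro _ _ hw; exact ⟨hw, aux_self_mem_monoComponent⟩
  | @cons w u v ha p ih =>
    intro hcol havoid hw
    have hwQ : w ∉ B.verts := fun hq => havoid w (by simp) ⟨hw, hq⟩
    have hu : u ∈ A.verts := aux_interior_nbr hsup hwQ ha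
    have hcu : c u = c w := hcol u (by simp)
    obtain ⟨hv, hmem⟩ := ih (fun z hz => (hcol z (by simp [hz])).trans hcu.symm)
        (fun z hz => havoid z (by simp [hz])) hu
    refine ⟨hv, aux_mem_monoComponent_trans ?_ hmem⟩
    exact aux_mem_monoComponent_of_adj aux_self_mem_monoComponent
      (aux_induce_adj ha) (by rw [← hcA, ← hcA]; exact hcu)

lemma aux_cross_side {A B : G.Subgraph} (hsup : A ⊔ B = ⊤) (c : V → ℤ)
    (cA : ↥A.verts → ℤ) (hcA : ∀ v : ↥A.verts, c ↑v = cA v) :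
    ∀ {v b0 : V} (p : G.Walk v b0), (∀ z ∈ p.support, c z = c v) →
    b0 ∈ A.verts ∩ B.verts → ∀ hv : v ∈ A.verts,
    ∃ b, ∃ hb : b ∈ A.verts ∩ B.verts,
      (⟨v, hv⟩ : ↥A.verts) ∈ monoComponent (G.induce A.verts) cA ⟨b, hb.1⟩ := by
  intro v b0 p
  induction p with
  | nil => intro _ hb0 hv; exact ⟨_, hb0, aux_self_mem_monoComponent⟩
  | @cons v u b0 ha p ih =>
    intro hcol hb0 hv
    by_cases hvBd : v ∈ A.verts ∩ B.verts
    · exact ⟨v, hvBd, aux_self_mem_monoComponent⟩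
    · have hvQ : v ∉ B.verts := fun hq => hvBd ⟨hv, hq⟩
      have hu : u ∈ A.verts := aux_interior_nbr hsup hvQ ha
      have hcu : c u = c v := hcol u (by simp)
      obtain ⟨b, hb, hmem⟩ := ih (fun z hz => (hcol z (by simp [hz])).trans hcu.symm) hb0 hu
      refine ⟨b, hb, ?_⟩
      exact aux_mem_monoComponent_of_adj hmem (aux_induce_adj ha.symm)
        (by rw [← hcA, ← hcA]; exact hcu.symm)

end SepHelpers

set_option maxHeartbeats 2000000 in
lemma aux_sq_arith (a b n θ q μA μB : ℕ) (hq : q + 1 ≤ θ) (hA : 3*θ+1 ≤ μA)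
    (hB : 3*θ+1 ≤ μB) (hAB : μA + μB ≤ n + q) (hn : 9*θ+1 ≤ n)
    (ha : a ≤ μA + q) (hb : b ≤ μB + q) :
    a^2 + b^2 ≤ n^2 ∧ a ≤ n ∧ b ≤ n := by
  have h1 : a ≤ n := by omega
  have h2 : b ≤ n := by omega
  refine ⟨?_, h1, h2⟩
  zify at *
  nlinarith [sq_nonneg ((μA:ℤ) - μB), sq_nonneg ((a:ℤ)+b-n), sq_nonneg ((n:ℤ)-μA-μB),
    mul_nonneg (sub_nonneg.2 hA) (sub_nonneg.2 hB)]

theorem aux_tangle_case {V : Type} [Fintype V] (G : SimpleGraph V) (θ : ℕ) (Y1 : Set V)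
    (hY1lb : 9 * θ + 1 ≤ Y1.ncard)
    (htan : ∀ A B : G.Subgraph, IsSeparation G A B → (A.verts ∩ B.verts).ncard < θ →
      (A.verts ∩ Y1).ncard ≤ 3 * θ ∨ (B.verts ∩ Y1).ncard ≤ 3 * θ) :
    IsTangle G θ {p : G.Subgraph × G.Subgraph |
        IsSeparation G p.1 p.2 ∧ (p.1.verts ∩ p.2.verts).ncard < θ ∧
        (p.1.verts ∩ Y1).ncard ≤ 3 * θ} := by
  have hsep_symm : ∀ A B : G.Subgraph, IsSeparation G A B → IsSeparation G B A := by
    intro A B ⟨h1, h2⟩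
    exact ⟨by rwa [sup_comm], h2.symm⟩
  refine ⟨fun p hp => ⟨hp.1, hp.2.1⟩, ?_, ?_, ?_⟩
  · intro A B hsep hord
    rcases htan A B hsep hord with h | h
    · exact Or.inl ⟨hsep, hord, h⟩
    · exact Or.inr ⟨hsep_symm A B hsep, by rwa [Set.inter_comm], h⟩
  · rintro p₁ hp₁ p₂ hp₂ p₃ hp₃ htop
    have hverts : p₁.1.verts ∪ p₂.1.verts ∪ p₃.1.verts = Set.univ := by
      have := congrArg SimpleGraph.Subgraph.verts htop
      simpa [SimpleGraph.Subgraph.verts_sup] using this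
    have hsub : Y1 ⊆ (p₁.1.verts ∩ Y1) ∪ (p₂.1.verts ∩ Y1) ∪ (p₃.1.verts ∩ Y1) := by
      intro y hy
      have : y ∈ p₁.1.verts ∪ p₂.1.verts ∪ p₃.1.verts := hverts ▸ Set.mem_univ y
      rcases this with (h | h) | h
      · exact Or.inl (Or.inl ⟨h, hy⟩)
      · exact Or.inl (Or.inr ⟨h, hy⟩)
      · exact Or.inr ⟨h, hy⟩
    have hle : Y1.ncard ≤ 9 * θ := by
      calc Y1.ncard ≤ ((p₁.1.verts ∩ Y1) ∪ (p₂.1.verts ∩ Y1) ∪ (p₃.1.verts ∩ Y1)).ncard :=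
            Set.ncard_le_ncard hsub (Set.toFinite _)
        _ ≤ ((p₁.1.verts ∩ Y1) ∪ (p₂.1.verts ∩ Y1)).ncard + (p₃.1.verts ∩ Y1).ncard :=
            Set.ncard_union_le _ _
        _ ≤ (p₁.1.verts ∩ Y1).ncard + (p₂.1.verts ∩ Y1).ncard + (p₃.1.verts ∩ Y1).ncard := by
            have := Set.ncard_union_le (p₁.1.verts ∩ Y1) (p₂.1.verts ∩ Y1)
            omega
        _ ≤ 3 * θ + 3 * θ + 3 * θ := by
            have h1 := hp₁.2.2; have h2 := hp₂.2.2; have h3 := hp₃.2.2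
            omega
        _ = 9 * θ := by ring
    omega
  · rintro p hp huniv
    have heq : (p.1.verts ∩ Y1) = Y1 := by rw [huniv, Set.univ_inter]
    have h2 := hp.2.2
    rw [heq] at h2
    omega

set_option maxHeartbeats 2000000 in
lemma aux_build_instance {V : Type} [Fintype V] {G : SimpleGraph V} {s r : ℕ}
    {Y1 : Set V} {L : V → Finset ℤ} {F : Finset ℤ}
    (hs : 0 < s) (hr : 0 < r)
    (hL : IsSRYList G s r Y1 L) (hF : F.card ≤ r)
    (A B : G.Subgraph) (hsup : A ⊔ B = ⊤)
    (x : V → ℤ) (hx : ∀ b ∈ A.verts ∩ B.verts, b ∉ Y1 → x b ∈ L b ∧ x b ∉ F) :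
    ∃ L' : ↥A.verts → Finset ℤ,
      (∀ v, L' v ⊆ L ↑v) ∧
      (∀ v, ↑v ∈ Y1 → L' v = L ↑v) ∧
      (∀ v, ↑v ∈ A.verts ∩ B.verts → ↑v ∉ Y1 → L' v = {x ↑v}) ∧
      (∀ v : ↥A.verts, ↑v ∉ Y1 ∪ A.verts ∩ B.verts → L' v ∩ F = L ↑v ∩ F) ∧
      IsSRYList (G.induce A.verts) s r {v : ↥A.verts | ↑v ∈ Y1 ∪ A.verts ∩ B.verts} L' := by
  classical
  obtain ⟨hL1, hL2, hL3, hL4, hL5⟩ := hL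
  set Bd : Set V := A.verts ∩ B.verts with hBd
  set NewS : Set V := Bd \ Y1 with hNewS
  set Trim : Set V := {y | y ∈ A.verts ∧ y ∉ Bd ∧ y ∉ Y1 ∧
      1 ≤ (G.neighborSet y ∩ NewS).ncard ∧
      (G.neighborSet y ∩ Y1).ncard + (G.neighborSet y ∩ NewS).ncard < s} with hTrim
  have hkpos : ∀ y : V, ∀ u, G.Adj y u → u ∈ Y1 → 1 ≤ (G.neighborSet y ∩ Y1).ncard := by
    intro y u hadj hu
    exact (Set.ncard_pos (Set.toFinite _)).mpr ⟨u, hadj, hu⟩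
  have hmpos : ∀ y : V, ∀ u, G.Adj y u → u ∈ NewS → 1 ≤ (G.neighborSet y ∩ NewS).ncard := by
    intro y u hadj hu
    exact (Set.ncard_pos (Set.toFinite _)).mpr ⟨u, hadj, hu⟩
  have hcardk : ∀ y : V, y ∉ Y1 → (G.neighborSet y ∩ Y1).ncard < s →
      (L y).card = s + r - (G.neighborSet y ∩ Y1).ncard := by
    intro y hyY1 hyk
    rcases Nat.eq_zero_or_pos ((G.neighborSet y ∩ Y1).ncard) with h0 | h1
    · have hnc : y ∉ closedNbhd G Y1 := by
        rintro (h | ⟨u, hu, hadj⟩)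
        · exact hyY1 h
        · have := hkpos y u hadj hu
          omega
      rw [hL4 y hnc, h0]; omega
    · exact (hL3 y ⟨hyY1, h1, hyk⟩).1
  have hXex : ∀ y ∈ Trim, ∃ X : Finset ℤ, X ⊆ L y ∧ (∀ z ∈ X, z ∉ F) ∧
      X.card = (G.neighborSet y ∩ NewS).ncard ∧
      (∀ b, b ∈ G.neighborSet y ∩ NewS → x b ∈ L y → x b ∈ X) := by
    intro y hy
    obtain ⟨hyA, hyBd, hyY1, hym, hyk⟩ := hy
    set Fo : Finset ℤ :=
      ((Set.toFinite (G.neighborSet y ∩ NewS)).toFinset.image x) ∩ L y with hFo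
    have hFoLF : Fo ⊆ L y \ F := by
      intro z hz
      rw [hFo, Finset.mem_inter, Finset.mem_image] at hz
      obtain ⟨⟨b, hb, rfl⟩, hzL⟩ := hz
      rw [Set.Finite.mem_toFinset] at hb
      exact Finset.mem_sdiff.mpr ⟨hzL, (hx b hb.2.1 hb.2.2).2⟩
    have hFocard : Fo.card ≤ (G.neighborSet y ∩ NewS).ncard := by
      calc Fo.card ≤ ((Set.toFinite (G.neighborSet y ∩ NewS)).toFinset.image x).card :=
            Finset.card_le_card (Finset.inter_subset_left)
        _ ≤ (Set.toFinite (G.neighborSet y ∩ NewS)).toFinset.card := Finset.card_image_le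
        _ = (G.neighborSet y ∩ NewS).ncard :=
            (Set.ncard_eq_toFinset_card _ (Set.toFinite _)).symm
    have hLF : (G.neighborSet y ∩ NewS).ncard ≤ (L y \ F).card := by
      have h1 : (L y).card = s + r - (G.neighborSet y ∩ Y1).ncard :=
        hcardk y hyY1 (by omega)
      have h2 : (L y).card - F.card ≤ (L y \ F).card := Finset.le_card_sdiff _ _
      omega
    obtain ⟨Xc, hX1, hX2, hX3⟩ := Finset.exists_subsuperset_card_eq hFoLF hFocard hLF
    refine ⟨Xc, fun z hz => (Finset.mem_sdiff.mp (hX2 hz)).1,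
      fun z hz => (Finset.mem_sdiff.mp (hX2 hz)).2, hX3, ?_⟩
    intro b hb hbL
    apply hX1
    rw [hFo, Finset.mem_inter, Finset.mem_image]
    exact ⟨⟨b, (Set.Finite.mem_toFinset _).mpr hb, rfl⟩, hbL⟩
  choose X hXsub hXF hXcard hXmem using hXex
  set L' : ↥A.verts → Finset ℤ := fun v => if hN : (v : V) ∈ NewS then {x ↑v}
    else if hT : (v : V) ∈ Trim then L ↑v \ X ↑v hT else L ↑v with hL'
  have hL'def : ∀ v : ↥A.verts, L' v = if hN : (v : V) ∈ NewS then {x ↑v}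
    else if hT : (v : V) ∈ Trim then L ↑v \ X ↑v hT else L ↑v := fun v => rfl
  have hsub : ∀ v, L' v ⊆ L ↑v := by
    intro v
    rw [hL'def v]
    by_cases hN : (v : V) ∈ NewS
    · rw [dif_pos hN]
      intro z hz
      rw [Finset.mem_singleton] at hz
      subst hz
      exact (hx ↑v hN.1 hN.2).1
    · rw [dif_neg hN]
      by_cases hT : (v : V) ∈ Trim
      · rw [dif_pos hT]; exact Finset.sdiff_subset
      · rw [dif_neg hT]
  have hY1un : ∀ v : ↥A.verts, (v : V) ∈ Y1 → L' v = L ↑v := by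
    intro v hv
    have hN : (v : V) ∉ NewS := fun h => h.2 hv
    have hT : (v : V) ∉ Trim := fun h => h.2.2.1 hv
    rw [hL'def v, dif_neg hN, dif_neg hT]
  have hNewSing : ∀ v : ↥A.verts, (v : V) ∈ NewS → L' v = {x ↑v} := by
    intro v hv
    rw [hL'def v, dif_pos hv]
  have hTrimEq : ∀ v : ↥A.verts, (hT : (v : V) ∈ Trim) → L' v = L ↑v \ X ↑v hT := by
    intro v hT
    have hN : (v : V) ∉ NewS := fun h => hT.2.1 h.1
    rw [hL'def v, dif_neg hN, dif_pos hT]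
  have hUntouched : ∀ v : ↥A.verts, (v : V) ∉ NewS → (v : V) ∉ Trim → L' v = L ↑v := by
    intro v hN hT
    rw [hL'def v, dif_neg hN, dif_neg hT]
  have hTrimCard : ∀ v : ↥A.verts, (hT : (v : V) ∈ Trim) →
      (L' v).card = s + r - ((G.neighborSet ↑v ∩ Y1).ncard + (G.neighborSet ↑v ∩ NewS).ncard)
      := by
    intro v hT
    rw [hTrimEq v hT, Finset.card_sdiff_of_subset (hXsub ↑v hT), hXcard ↑v hT,
      hcardk ↑v hT.2.2.1 (by have := hT.2.2.2.2; omega)]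
    have := hT.2.2.2.2
    omega
  have hint : ∀ v : ↥A.verts, (v : V) ∉ Bd → ∀ u, G.Adj ↑v u → u ∈ A.verts := by
    intro v hv u hadj
    refine aux_interior_nbr hsup ?_ hadj
    intro hB
    exact hv ⟨v.2, hB⟩
  have hcnt : ∀ y : ↥A.verts, (y : V) ∉ Bd →
      ((G.induce A.verts).neighborSet y ∩ {u : ↥A.verts | ↑u ∈ Y1 ∪ Bd}).ncard
        = (G.neighborSet (y : V) ∩ Y1).ncard + (G.neighborSet (y : V) ∩ NewS).ncard := by
    intro y hy
    rw [aux_ncard_induce_nbr y (hint y hy)]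
    have hsplit : G.neighborSet (y : V) ∩ (Y1 ∪ Bd)
        = (G.neighborSet (y : V) ∩ Y1) ∪ (G.neighborSet (y : V) ∩ NewS) := by
      ext z
      simp only [Set.mem_inter_iff, Set.mem_union, hNewS, Set.mem_diff]
      tauto
    rw [hsplit, Set.ncard_union_eq ?_ (Set.toFinite _) (Set.toFinite _)]
    rw [Set.disjoint_left]
    rintro z ⟨_, hz1⟩ ⟨_, hz2⟩
    exact hz2.2 hz1
  refine ⟨L', hsub, hY1un, fun v h1 h2 => hNewSing v ⟨h1, h2⟩, ?_, ?_, ?_, ?_, ?_, ?_⟩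
  · intro v hv
    rw [Set.mem_union] at hv
    push_neg at hv
    have hN : (v : V) ∉ NewS := fun h => hv.2 h.1
    by_cases hT : (v : V) ∈ Trim
    · rw [hTrimEq v hT]
      ext z
      simp only [Finset.mem_inter, Finset.mem_sdiff]
      constructor
      · rintro ⟨⟨h1, _⟩, h2⟩; exact ⟨h1, h2⟩
      · rintro ⟨h1, h2⟩
        exact ⟨⟨h1, fun hzX => hXF ↑v hT z hzX h2⟩, h2⟩
    · rw [hUntouched v hN hT]
  · intro v
    by_cases hN : (v : V) ∈ NewS
    · rw [hNewSing v hN, Finset.card_singleton]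
      omega
    · by_cases hT : (v : V) ∈ Trim
      · rw [hTrimCard v hT]
        have := hT.2.2.2.2
        omega
      · rw [hUntouched v hN hT]
        exact hL1 ↑v
  · ext v
    simp only [Set.mem_setOf_eq]
    constructor
    · intro hv
      rcases hv with hv | hv
      · rw [hY1un v hv]
        have : (v : V) ∈ {v | (L v).card = 1} := by rw [← hL2]; exact hv
        exact this
      · by_cases hY : (v : V) ∈ Y1
        · rw [hY1un v hY]
          show (v : V) ∈ {v | (L v).card = 1}
          rw [← hL2]; exact hY
        · rw [hNewSing v ⟨hv, hY⟩, Finset.card_singleton]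
    · intro hv
      by_contra hno
      rw [Set.mem_union] at hno
      push_neg at hno
      have hN : (v : V) ∉ NewS := fun h => hno.2 h.1
      by_cases hT : (v : V) ∈ Trim
      · rw [hTrimCard v hT] at hv
        have := hT.2.2.2.2
        omega
      · rw [hUntouched v hN hT] at hv
        have : (v : V) ∈ Y1 := by rw [hL2]; exact hv
        exact hno.1 this
  · intro y hy
    obtain ⟨hyn, hyge, hylt⟩ := hy
    have hynU : (y : V) ∉ Y1 ∪ Bd := hyn
    rw [Set.mem_union] at hynU
    push_neg at hynU
    obtain ⟨hyY1, hyBd⟩ := hynU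
    rw [hcnt y hyBd] at hyge hylt ⊢
    constructor
    · rcases Nat.eq_zero_or_pos ((G.neighborSet (y : V) ∩ NewS).ncard) with h0 | h1
      · have hN : (y : V) ∉ NewS := fun h => hyBd h.1
        have hT : (y : V) ∉ Trim := fun h => by have := h.2.2.2.1; omega
        rw [hUntouched y hN hT, hcardk ↑y hyY1 (by omega), h0]; omega
      · have hT : (y : V) ∈ Trim := ⟨y.2, hyBd, hyY1, h1, hylt⟩
        rw [hTrimCard y hT]
    · intro u hu
      obtain ⟨hadj, huY⟩ := hu
      have hadjG : G.Adj (y : V) ↑u := hadj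
      have huY' : (u : V) ∈ Y1 ∪ Bd := huY
      rcases (Set.mem_union _ _ _).mp huY' with hu1 | hu2
      · have hk1 : 1 ≤ (G.neighborSet (y : V) ∩ Y1).ncard := hkpos ↑y ↑u hadjG hu1
        have hyNlt : (y : V) ∈ Nlt G s Y1 := ⟨hyY1, hk1, by omega⟩
        rw [hY1un u hu1]
        exact Finset.disjoint_of_subset_left (hsub y) ((hL3 ↑y hyNlt).2 ↑u ⟨hadjG, hu1⟩)
      · by_cases hu1 : (u : V) ∈ Y1
        · have hk1 : 1 ≤ (G.neighborSet (y : V) ∩ Y1).ncard := hkpos ↑y ↑u hadjG hu1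
          have hyNlt : (y : V) ∈ Nlt G s Y1 := ⟨hyY1, hk1, by omega⟩
          rw [hY1un u hu1]
          exact Finset.disjoint_of_subset_left (hsub y) ((hL3 ↑y hyNlt).2 ↑u ⟨hadjG, hu1⟩)
        · have huN : (u : V) ∈ NewS := ⟨hu2, hu1⟩
          have hm1 : 1 ≤ (G.neighborSet (y : V) ∩ NewS).ncard := hmpos ↑y ↑u hadjG huN
          have hT : (y : V) ∈ Trim := ⟨y.2, hyBd, hyY1, hm1, hylt⟩
          rw [hNewSing u huN, hTrimEq y hT, Finset.disjoint_singleton_right,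
            Finset.mem_sdiff]
          rintro ⟨hmem, hnmem⟩
          exact hnmem (hXmem ↑y hT ↑u ⟨hadjG, huN⟩ hmem)
  · intro v hv
    rw [closedNbhd, Set.mem_union] at hv
    push_neg at hv
    obtain ⟨hv1, hv2⟩ := hv
    rw [Set.mem_setOf_eq] at hv2
    push_neg at hv2
    have hvU : (v : V) ∉ Y1 ∪ Bd := hv1
    rw [Set.mem_union] at hvU
    push_neg at hvU
    have hnonb : ∀ u : V, G.Adj ↑v u → u ∉ Y1 ∪ Bd := by
      intro u hadj hmem
      have huA : u ∈ A.verts := hint v hvU.2 u hadj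
      exact hv2 ⟨u, huA⟩ hmem (aux_induce_adj hadj)
    have hN : (v : V) ∉ NewS := fun h => hvU.2 h.1
    have hT : (v : V) ∉ Trim := by
      rintro ⟨_, _, _, hm1, _⟩
      obtain ⟨u, huu⟩ := (Set.ncard_pos (s := G.neighborSet (v : V) ∩ NewS)
        (Set.toFinite _)).mp (by omega)
      exact hnonb u huu.1 (Or.inr huu.2.1)
    rw [hUntouched v hN hT]
    apply hL4
    rintro (h | ⟨u, hu, hadj⟩)
    · exact hvU.1 h
    · exact hnonb u hadj (Or.inl hu)
  · intro v hv
    have hvU : (v : V) ∉ Y1 ∪ Bd := hv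
    rw [Set.mem_union] at hvU
    push_neg at hvU
    have hN : (v : V) ∉ NewS := fun h => hvU.2 h.1
    by_cases hT : (v : V) ∈ Trim
    · rw [hTrimCard v hT]
      have := hT.2.2.2.2
      omega
    · rw [hUntouched v hN hT]
      exact hL5 ↑v hvU.1

/-- The "coloring or tangle" lemma. -/
theorem stmt15 (s t θ η r : ℕ) (hs : 0 < s) (ht : 0 < t) (hθ : 0 < θ) (hr : 0 < r)
    (hη : 9 * θ + 1 ≤ η) (g : ℕ → ℕ) (hg : Monotone g)
    (V : Type) [Fintype V] (G : SimpleGraph V)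
    (hG : ¬ HasSubgraphCopy G (completeBipartiteGraph (Fin s) (Fin t)))
    (Y1 : Set V) (hY1lb : 9 * θ + 1 ≤ Y1.ncard) (hY1ub : Y1.ncard ≤ η)
    (F : Finset ℤ) (hF : F.card ≤ r)
    (L : V → Finset ℤ) (hL : IsSRYList G s r Y1 L)
    (hstab : ∀ x ∈ F, IsStableSet G {y | y ∈ Y1 ∧ x ∈ L y}) :
    (∃ c : V → ℤ, IsLColoring L c ∧ IsBoundedColoring G L c η g ∧
        ∀ x ∈ F, IsStableSet G {v | c v = x}) ∨
    (∃ S : Set V, S.ncard < Fintype.card V ∧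
      ∃ (Y1' : Set ↥S) (L' : ↥S → Finset ℤ),
        Y1'.ncard ≤ η ∧
        IsSRYList (G.induce S) s r Y1' L' ∧
        (∀ v : ↥S, L' v ⊆ L ↑v) ∧
        (¬ ∃ c' : ↥S → ℤ, IsLColoring L' c' ∧ IsBoundedColoring (G.induce S) L' c' η g ∧
            ∀ x ∈ F, IsStableSet (G.induce S) {v | c' v = x}) ∧
        ({v : ↥S | ↑v ∈ Y1 ∧ (L ↑v ∩ F).Nonempty} = {v : ↥S | v ∈ Y1' ∧ (L' v ∩ F).Nonempty}) ∧
        (∀ v : ↥S, v ∉ Y1' → L' v ∩ F = L ↑v ∩ F)) ∨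
    IsTangle G θ {p : G.Subgraph × G.Subgraph |
        IsSeparation G p.1 p.2 ∧ (p.1.verts ∩ p.2.verts).ncard < θ ∧
        (p.1.verts ∩ Y1).ncard ≤ 3 * θ} := by
  classical
  by_cases h2 : (∃ S : Set V, S.ncard < Fintype.card V ∧
      ∃ (Y1' : Set ↥S) (L' : ↥S → Finset ℤ),
        Y1'.ncard ≤ η ∧
        IsSRYList (G.induce S) s r Y1' L' ∧
        (∀ v : ↥S, L' v ⊆ L ↑v) ∧
        (¬ ∃ c' : ↥S → ℤ, IsLColoring L' c' ∧ IsBoundedColoring (G.induce S) L' c' η g ∧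
            ∀ x ∈ F, IsStableSet (G.induce S) {v | c' v = x}) ∧
        ({v : ↥S | ↑v ∈ Y1 ∧ (L ↑v ∩ F).Nonempty} = {v : ↥S | v ∈ Y1' ∧ (L' v ∩ F).Nonempty}) ∧
        (∀ v : ↥S, v ∉ Y1' → L' v ∩ F = L ↑v ∩ F))
  · exact Or.inr (Or.inl h2)
  by_cases htan : ∀ A B : G.Subgraph, IsSeparation G A B → (A.verts ∩ B.verts).ncard < θ →
      (A.verts ∩ Y1).ncard ≤ 3 * θ ∨ (B.verts ∩ Y1).ncard ≤ 3 * θ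
  · exact Or.inr (Or.inr (aux_tangle_case G θ Y1 hY1lb htan))
  left
  push_neg at htan
  obtain ⟨A, B, hsep, hord, hA3, hB3⟩ := htan
  obtain ⟨hsup, -⟩ := hsep
  have hsupBA : B ⊔ A = ⊤ := by rwa [sup_comm] at hsup
  have hxex : ∀ b : V, ∃ z : ℤ, b ∈ A.verts ∩ B.verts → b ∉ Y1 → z ∈ L b ∧ z ∉ F := by
    intro b
    by_cases hb : b ∉ Y1
    · have h5 : r + 1 ≤ (L b).card := hL.2.2.2.2 b hb
      have hpos : 0 < (L b \ F).card := by
        have := Finset.le_card_sdiff F (L b)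
        omega
      obtain ⟨z, hz⟩ := Finset.card_pos.mp hpos
      rw [Finset.mem_sdiff] at hz
      exact ⟨z, fun _ _ => hz⟩
    · exact ⟨0, fun _ h => absurd h hb⟩
  choose x hx using hxex
  obtain ⟨LA, hsubA, hY1unA, hNewA, hFA, hSRYA⟩ :=
    aux_build_instance hs hr hL hF A B hsup x (fun b h1 h2 => hx b h1 h2)
  obtain ⟨LB, hsubB, hY1unB, hNewB, hFB, hSRYB⟩ :=
    aux_build_instance hs hr hL hF B A hsupBA x (fun b h1 h2 => hx b ⟨h1.2, h1.1⟩ h2)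
  have hcov : A.verts ∪ B.verts = Set.univ := Set.eq_univ_of_forall (aux_verts_cover hsup)
  -- counting
  have hABsum : (A.verts ∩ Y1).ncard + (B.verts ∩ Y1).ncard
      ≤ Y1.ncard + (A.verts ∩ B.verts).ncard := by
    have h1 := Set.ncard_union_add_ncard_inter (A.verts ∩ Y1) (B.verts ∩ Y1)
      (Set.toFinite _) (Set.toFinite _)
    have h2 : (A.verts ∩ Y1) ∪ (B.verts ∩ Y1) = Y1 := by
      rw [← Set.union_inter_distrib_right, hcov, Set.univ_inter]
    have h3 : (A.verts ∩ Y1) ∩ (B.verts ∩ Y1) ⊆ A.verts ∩ B.verts := by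
      rintro z ⟨⟨ha', _⟩, ⟨hb', _⟩⟩; exact ⟨ha', hb'⟩
    have h4 := Set.ncard_le_ncard h3 (Set.toFinite _)
    rw [h2] at h1
    omega
  have haAle : ({v : ↥A.verts | ↑v ∈ Y1 ∪ A.verts ∩ B.verts}).ncard
      ≤ (A.verts ∩ Y1).ncard + (A.verts ∩ B.verts).ncard := by
    rw [aux_ncard_setOf_val]
    have hsubst : (Y1 ∪ A.verts ∩ B.verts) ∩ A.verts
        ⊆ (A.verts ∩ Y1) ∪ (A.verts ∩ B.verts) := by
      rintro z ⟨hz1 | hz1, hz2⟩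
      · exact Or.inl ⟨hz2, hz1⟩
      · exact Or.inr hz1
    calc ((Y1 ∪ A.verts ∩ B.verts) ∩ A.verts).ncard
        ≤ ((A.verts ∩ Y1) ∪ (A.verts ∩ B.verts)).ncard :=
          Set.ncard_le_ncard hsubst (Set.toFinite _)
      _ ≤ (A.verts ∩ Y1).ncard + (A.verts ∩ B.verts).ncard := Set.ncard_union_le _ _
  have haBle : ({v : ↥B.verts | ↑v ∈ Y1 ∪ B.verts ∩ A.verts}).ncard
      ≤ (B.verts ∩ Y1).ncard + (A.verts ∩ B.verts).ncard := by
    rw [aux_ncard_setOf_val]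
    have hsubst : (Y1 ∪ B.verts ∩ A.verts) ∩ B.verts
        ⊆ (B.verts ∩ Y1) ∪ (A.verts ∩ B.verts) := by
      rintro z ⟨hz1 | hz1, hz2⟩
      · exact Or.inl ⟨hz2, hz1⟩
      · exact Or.inr ⟨hz1.2, hz1.1⟩
    calc ((Y1 ∪ B.verts ∩ A.verts) ∩ B.verts).ncard
        ≤ ((B.verts ∩ Y1) ∪ (A.verts ∩ B.verts)).ncard :=
          Set.ncard_le_ncard hsubst (Set.toFinite _)
      _ ≤ (B.verts ∩ Y1).ncard + (A.verts ∩ B.verts).ncard := Set.ncard_union_le _ _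
  obtain ⟨hsqsum, hsqA, hsqB⟩ := aux_sq_arith
    ({v : ↥A.verts | ↑v ∈ Y1 ∪ A.verts ∩ B.verts}).ncard
    ({v : ↥B.verts | ↑v ∈ Y1 ∪ B.verts ∩ A.verts}).ncard
    Y1.ncard θ ((A.verts ∩ B.verts).ncard) ((A.verts ∩ Y1).ncard) ((B.verts ∩ Y1).ncard)
    (by omega) (by omega) (by omega) hABsum hY1lb haAle haBle
  -- proper subsets
  have hcardA : A.verts.ncard < Fintype.card V := by
    have hAneq : A.verts ≠ Set.univ := by
      intro heq
      have hsubBd : B.verts ∩ Y1 ⊆ A.verts ∩ B.verts := by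
        rintro z ⟨hz1, _⟩
        exact ⟨by rw [heq]; trivial, hz1⟩
      have := Set.ncard_le_ncard hsubBd (Set.toFinite _)
      omega
    have hss : A.verts ⊂ Set.univ := Set.ssubset_univ_iff.mpr hAneq
    have := Set.ncard_lt_ncard hss (Set.toFinite _)
    rwa [Set.ncard_univ, Nat.card_eq_fintype_card] at this
  have hcardB : B.verts.ncard < Fintype.card V := by
    have hBneq : B.verts ≠ Set.univ := by
      intro heq
      have hsubBd : A.verts ∩ Y1 ⊆ A.verts ∩ B.verts := by
        rintro z ⟨hz1, _⟩
        exact ⟨hz1, by rw [heq]; trivial⟩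
      have := Set.ncard_le_ncard hsubBd (Set.toFinite _)
      omega
    have hss : B.verts ⊂ Set.univ := Set.ssubset_univ_iff.mpr hBneq
    have := Set.ncard_lt_ncard hss (Set.toFinite _)
    rwa [Set.ncard_univ, Nat.card_eq_fintype_card] at this
  -- the (c)-condition sets
  have hseteqA : {v : ↥A.verts | ↑v ∈ Y1 ∧ (L ↑v ∩ F).Nonempty}
      = {v : ↥A.verts | v ∈ {v : ↥A.verts | ↑v ∈ Y1 ∪ A.verts ∩ B.verts}
          ∧ (LA v ∩ F).Nonempty} := by
    ext v
    simp only [Set.mem_setOf_eq]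
    constructor
    · rintro ⟨h1, hne⟩
      exact ⟨Or.inl h1, by rwa [hY1unA v h1]⟩
    · rintro ⟨h1, hne⟩
      rcases h1 with h1 | h1
      · exact ⟨h1, by rwa [hY1unA v h1] at hne⟩
      · by_cases hY : (v : V) ∈ Y1
        · exact ⟨hY, by rwa [hY1unA v hY] at hne⟩
        · exfalso
          rw [hNewA v h1 hY] at hne
          obtain ⟨z, hz⟩ := hne
          rw [Finset.mem_inter, Finset.mem_singleton] at hz
          exact (hx ↑v h1 hY).2 (hz.1 ▸ hz.2)
  have hseteqB : {v : ↥B.verts | ↑v ∈ Y1 ∧ (L ↑v ∩ F).Nonempty}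
      = {v : ↥B.verts | v ∈ {v : ↥B.verts | ↑v ∈ Y1 ∪ B.verts ∩ A.verts}
          ∧ (LB v ∩ F).Nonempty} := by
    ext v
    simp only [Set.mem_setOf_eq]
    constructor
    · rintro ⟨h1, hne⟩
      exact ⟨Or.inl h1, by rwa [hY1unB v h1]⟩
    · rintro ⟨h1, hne⟩
      rcases h1 with h1 | h1
      · exact ⟨h1, by rwa [hY1unB v h1] at hne⟩
      · by_cases hY : (v : V) ∈ Y1
        · exact ⟨hY, by rwa [hY1unB v hY] at hne⟩
        · exfalso
          rw [hNewB v h1 hY] at hne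
          obtain ⟨z, hz⟩ := hne
          rw [Finset.mem_inter, Finset.mem_singleton] at hz
          exact (hx ↑v ⟨h1.2, h1.1⟩ hY).2 (hz.1 ▸ hz.2)
  -- get the colorings from the failure of option 2
  have hexA : ∃ cc : ↥A.verts → ℤ, IsLColoring LA cc ∧
      IsBoundedColoring (G.induce A.verts) LA cc η g ∧
      ∀ x' ∈ F, IsStableSet (G.induce A.verts) {v | cc v = x'} := by
    by_contra hno
    exact h2 ⟨A.verts, hcardA, {v : ↥A.verts | ↑v ∈ Y1 ∪ A.verts ∩ B.verts}, LA,
      by omega, hSRYA, hsubA, hno, hseteqA, fun v hv => hFA v (fun hmem =>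
        hv (show v ∈ {v : ↥A.verts | ↑v ∈ Y1 ∪ A.verts ∩ B.verts} from hmem))⟩
  have hexB : ∃ cc : ↥B.verts → ℤ, IsLColoring LB cc ∧
      IsBoundedColoring (G.induce B.verts) LB cc η g ∧
      ∀ x' ∈ F, IsStableSet (G.induce B.verts) {v | cc v = x'} := by
    by_contra hno
    exact h2 ⟨B.verts, hcardB, {v : ↥B.verts | ↑v ∈ Y1 ∪ B.verts ∩ A.verts}, LB,
      by omega, hSRYB, hsubB, hno, hseteqB, fun v hv => hFB v (fun hmem =>
        hv (show v ∈ {v : ↥B.verts | ↑v ∈ Y1 ∪ B.verts ∩ A.verts} from hmem))⟩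
  obtain ⟨cA, hLCA, hBCA, hStabA⟩ := hexA
  obtain ⟨cB, hLCB, hBCB, hStabB⟩ := hexB
  -- the combined coloring
  have hBmem : ∀ v : V, v ∉ A.verts → v ∈ B.verts :=
    fun v h => (aux_verts_cover hsup v).resolve_left h
  set c : V → ℤ := fun v => if h : v ∈ A.verts then cA ⟨v, h⟩ else cB ⟨v, hBmem v h⟩
    with hcdef
  have hcA : ∀ v : ↥A.verts, c ↑v = cA v := by
    intro v
    show (if h : (v : V) ∈ A.verts then cA ⟨↑v, h⟩ else cB ⟨↑v, hBmem ↑v h⟩) = cA v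
    rw [dif_pos v.2]
  have hbdAB : ∀ (b : V) (hb : b ∈ A.verts ∩ B.verts), cA ⟨b, hb.1⟩ = cB ⟨b, hb.2⟩ := by
    intro b hb
    by_cases hY : b ∈ Y1
    · have h1 : cA ⟨b, hb.1⟩ ∈ L b := by
        have := hLCA ⟨b, hb.1⟩
        rwa [hY1unA ⟨b, hb.1⟩ hY] at this
      have h2' : cB ⟨b, hb.2⟩ ∈ L b := by
        have := hLCB ⟨b, hb.2⟩
        rwa [hY1unB ⟨b, hb.2⟩ hY] at this
      have hcard1 : (L b).card = 1 := by
        have : b ∈ {v | (L v).card = 1} := by rw [← hL.2.1]; exact hY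
        exact this
      exact Finset.card_le_one.mp hcard1.le _ h1 _ h2'
    · have h1 : cA ⟨b, hb.1⟩ ∈ ({x b} : Finset ℤ) := by
        have := hLCA ⟨b, hb.1⟩
        rwa [hNewA ⟨b, hb.1⟩ hb hY] at this
      have h2' : cB ⟨b, hb.2⟩ ∈ ({x b} : Finset ℤ) := by
        have := hLCB ⟨b, hb.2⟩
        rwa [hNewB ⟨b, hb.2⟩ ⟨hb.2, hb.1⟩ hY] at this
      rw [Finset.mem_singleton] at h1 h2'
      rw [h1, h2']
  have hcB : ∀ v : ↥B.verts, c ↑v = cB v := by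
    intro v
    by_cases h : (v : V) ∈ A.verts
    · have e1 : c ↑v = cA ⟨↑v, h⟩ := by
        show (if h' : (v : V) ∈ A.verts then cA ⟨↑v, h'⟩ else cB ⟨↑v, hBmem ↑v h'⟩)
          = cA ⟨↑v, h⟩
        rw [dif_pos h]
      rw [e1, hbdAB ↑v ⟨h, v.2⟩]
    · show (if h' : (v : V) ∈ A.verts then cA ⟨↑v, h'⟩ else cB ⟨↑v, hBmem ↑v h'⟩) = cB v
      rw [dif_neg h]
  -- the big union sets
  have hYsetA : {v : ↥A.verts | (LA v).card = 1}
      = {v : ↥A.verts | ↑v ∈ Y1 ∪ A.verts ∩ B.verts} := hSRYA.2.1.symm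
  have hncA : ({v : ↥A.verts | (LA v).card = 1}).ncard
      = ({v : ↥A.verts | ↑v ∈ Y1 ∪ A.verts ∩ B.verts}).ncard := by rw [hYsetA]
  have hYsetB : {v : ↥B.verts | (LB v).card = 1}
      = {v : ↥B.verts | ↑v ∈ Y1 ∪ B.verts ∩ A.verts} := hSRYB.2.1.symm
  have hncB : ({v : ↥B.verts | (LB v).card = 1}).ncard
      = ({v : ↥B.verts | ↑v ∈ Y1 ∪ B.verts ∩ A.verts}).ncard := by rw [hYsetB]
  have hUAcard : (Subtype.val '' (⋃ v ∈ {v : ↥A.verts | (LA v).card = 1},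
      monoComponent (G.induce A.verts) cA v)).ncard
      ≤ ({v : ↥A.verts | ↑v ∈ Y1 ∪ A.verts ∩ B.verts}).ncard ^ 2
        * g (({v : ↥A.verts | ↑v ∈ Y1 ∪ A.verts ∩ B.verts}).ncard) := by
    rw [Set.ncard_image_of_injective _ Subtype.val_injective]
    have := hBCA.1
    rwa [hncA] at this
  have hUBcard : (Subtype.val '' (⋃ v ∈ {v : ↥B.verts | (LB v).card = 1},
      monoComponent (G.induce B.verts) cB v)).ncard
      ≤ ({v : ↥B.verts | ↑v ∈ Y1 ∪ B.verts ∩ A.verts}).ncard ^ 2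
        * g (({v : ↥B.verts | ↑v ∈ Y1 ∪ B.verts ∩ A.verts}).ncard) := by
    rw [Set.ncard_image_of_injective _ Subtype.val_injective]
    have := hBCB.1
    rwa [hncB] at this
  have hboundAB : ({v : ↥A.verts | ↑v ∈ Y1 ∪ A.verts ∩ B.verts}).ncard ^ 2
        * g (({v : ↥A.verts | ↑v ∈ Y1 ∪ A.verts ∩ B.verts}).ncard)
      + ({v : ↥B.verts | ↑v ∈ Y1 ∪ B.verts ∩ A.verts}).ncard ^ 2
        * g (({v : ↥B.verts | ↑v ∈ Y1 ∪ B.verts ∩ A.verts}).ncard)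
      ≤ Y1.ncard ^ 2 * g Y1.ncard := by
    have h1 : g (({v : ↥A.verts | ↑v ∈ Y1 ∪ A.verts ∩ B.verts}).ncard) ≤ g Y1.ncard :=
      hg hsqA
    have h2 : g (({v : ↥B.verts | ↑v ∈ Y1 ∪ B.verts ∩ A.verts}).ncard) ≤ g Y1.ncard :=
      hg hsqB
    calc ({v : ↥A.verts | ↑v ∈ Y1 ∪ A.verts ∩ B.verts}).ncard ^ 2
          * g (({v : ↥A.verts | ↑v ∈ Y1 ∪ A.verts ∩ B.verts}).ncard)
        + ({v : ↥B.verts | ↑v ∈ Y1 ∪ B.verts ∩ A.verts}).ncard ^ 2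
          * g (({v : ↥B.verts | ↑v ∈ Y1 ∪ B.verts ∩ A.verts}).ncard)
        ≤ ({v : ↥A.verts | ↑v ∈ Y1 ∪ A.verts ∩ B.verts}).ncard ^ 2 * g Y1.ncard
          + ({v : ↥B.verts | ↑v ∈ Y1 ∪ B.verts ∩ A.verts}).ncard ^ 2 * g Y1.ncard :=
          Nat.add_le_add (Nat.mul_le_mul_left _ h1) (Nat.mul_le_mul_left _ h2)
      _ = (({v : ↥A.verts | ↑v ∈ Y1 ∪ A.verts ∩ B.verts}).ncard ^ 2
          + ({v : ↥B.verts | ↑v ∈ Y1 ∪ B.verts ∩ A.verts}).ncard ^ 2) * g Y1.ncard := by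
          ring
      _ ≤ Y1.ncard ^ 2 * g Y1.ncard := Nat.mul_le_mul_right _ hsqsum
  have hUABcard : (Subtype.val '' (⋃ v ∈ {v : ↥A.verts | (LA v).card = 1},
        monoComponent (G.induce A.verts) cA v)
      ∪ Subtype.val '' (⋃ v ∈ {v : ↥B.verts | (LB v).card = 1},
        monoComponent (G.induce B.verts) cB v)).ncard ≤ Y1.ncard ^ 2 * g Y1.ncard := by
    have := Set.ncard_union_le
      (Subtype.val '' (⋃ v ∈ {v : ↥A.verts | (LA v).card = 1},
        monoComponent (G.induce A.verts) cA v))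
      (Subtype.val '' (⋃ v ∈ {v : ↥B.verts | (LB v).card = 1},
        monoComponent (G.induce B.verts) cB v))
    omega
  have hbound2 : Y1.ncard ^ 2 * g Y1.ncard ≤ η ^ 2 * g η :=
    Nat.mul_le_mul (Nat.pow_le_pow_left hY1ub 2) (hg hY1ub)
  -- membership helpers
  have hmemYA : ∀ (b : V) (hb : b ∈ A.verts ∩ B.verts),
      (⟨b, hb.1⟩ : ↥A.verts) ∈ {v : ↥A.verts | (LA v).card = 1} := by
    intro b hb
    rw [hYsetA]
    exact Or.inr hb
  have hmemYB : ∀ (b : V) (hb : b ∈ B.verts ∩ A.verts),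
      (⟨b, hb.1⟩ : ↥B.verts) ∈ {v : ↥B.verts | (LB v).card = 1} := by
    intro b hb
    rw [hYsetB]
    exact Or.inr hb
  have hmemY1A : ∀ (y : V), y ∈ Y1 → ∀ (hyA : y ∈ A.verts),
      (⟨y, hyA⟩ : ↥A.verts) ∈ {v : ↥A.verts | (LA v).card = 1} := by
    intro y hy hyA
    rw [hYsetA]
    exact Or.inl hy
  have hmemY1B : ∀ (y : V), y ∈ Y1 → ∀ (hyB : y ∈ B.verts),
      (⟨y, hyB⟩ : ↥B.verts) ∈ {v : ↥B.verts | (LB v).card = 1} := by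
    intro y hy hyB
    rw [hYsetB]
    exact Or.inl hy
  -- coverage lemmas
  have hcover1 : ∀ w v b0 : V, v ∈ monoComponent G c w → b0 ∈ monoComponent G c w →
      b0 ∈ A.verts ∩ B.verts →
      v ∈ Subtype.val '' (⋃ v ∈ {v : ↥A.verts | (LA v).card = 1},
          monoComponent (G.induce A.verts) cA v)
        ∪ Subtype.val '' (⋃ v ∈ {v : ↥B.verts | (LB v).card = 1},
          monoComponent (G.induce B.verts) cB v) := by
    intro w v b0 hv hb0 hbd
    obtain ⟨p1, hp1⟩ := aux_mem_monoComponent.mp hv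
    obtain ⟨p2, hp2⟩ := aux_mem_monoComponent.mp hb0
    have hcvw : c v = c w := hp1 v (SimpleGraph.Walk.end_mem_support p1)
    have hPcol : ∀ z ∈ (p1.reverse.append p2).support, c z = c v := by
      intro z hz
      rcases (SimpleGraph.Walk.mem_support_append_iff _ _).mp hz with h | h
      · rw [SimpleGraph.Walk.support_reverse, List.mem_reverse] at h
        rw [hp1 z h, hcvw]
      · rw [hp2 z h, hcvw]
    rcases aux_verts_cover hsup v with hvA | hvB
    · obtain ⟨b, hb, hmem⟩ :=
        aux_cross_side hsup c cA hcA (p1.reverse.append p2) hPcol hbd hvA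
      exact Or.inl ⟨⟨v, hvA⟩, Set.mem_biUnion (hmemYA b hb) hmem, rfl⟩
    · obtain ⟨b, hb, hmem⟩ :=
        aux_cross_side hsupBA c cB hcB (p1.reverse.append p2) hPcol ⟨hbd.2, hbd.1⟩ hvB
      exact Or.inr ⟨⟨v, hvB⟩, Set.mem_biUnion (hmemYB b hb) hmem, rfl⟩
  have hcover2A : ∀ (w : V) (hwA : w ∈ A.verts),
      (∀ z ∈ monoComponent G c w, z ∉ A.verts ∩ B.verts) →
      ∀ v ∈ monoComponent G c w, ∃ hv : v ∈ A.verts,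
        (⟨v, hv⟩ : ↥A.verts) ∈ monoComponent (G.induce A.verts) cA ⟨w, hwA⟩ := by
    intro w hwA hav v hv
    obtain ⟨p, hp⟩ := aux_mem_monoComponent.mp hv
    have hsupp := aux_support_mem_monoComponent p hp
    exact aux_stay_side hsup c cA hcA p hp (fun z hz => hav z (hsupp z hz)) hwA
  have hcover2B : ∀ (w : V) (hwB : w ∈ B.verts),
      (∀ z ∈ monoComponent G c w, z ∉ A.verts ∩ B.verts) →
      ∀ v ∈ monoComponent G c w, ∃ hv : v ∈ B.verts,
        (⟨v, hv⟩ : ↥B.verts) ∈ monoComponent (G.induce B.verts) cB ⟨w, hwB⟩ := by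
    intro w hwB hav v hv
    obtain ⟨p, hp⟩ := aux_mem_monoComponent.mp hv
    have hsupp := aux_support_mem_monoComponent p hp
    exact aux_stay_side hsupBA c cB hcB p hp
      (fun z hz h => hav z (hsupp z hz) ⟨h.2, h.1⟩) hwB
  refine ⟨c, ?_, ⟨?_, ?_⟩, ?_⟩
  · -- L-coloring
    intro v
    rcases aux_verts_cover hsup v with hvA | hvB
    · have hcv : c v = cA ⟨v, hvA⟩ := hcA ⟨v, hvA⟩
      rw [hcv]
      exact hsubA ⟨v, hvA⟩ (hLCA ⟨v, hvA⟩)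
    · have hcv : c v = cB ⟨v, hvB⟩ := hcB ⟨v, hvB⟩
      rw [hcv]
      exact hsubB ⟨v, hvB⟩ (hLCB ⟨v, hvB⟩)
  · -- first bound
    have hY1set : {v : V | (L v).card = 1} = Y1 := hL.2.1.symm
    rw [hY1set]
    have hsubU : (⋃ v ∈ Y1, monoComponent G c v)
        ⊆ Subtype.val '' (⋃ v ∈ {v : ↥A.verts | (LA v).card = 1},
            monoComponent (G.induce A.verts) cA v)
          ∪ Subtype.val '' (⋃ v ∈ {v : ↥B.verts | (LB v).card = 1},
            monoComponent (G.induce B.verts) cB v) := by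
      intro z hz
      rw [Set.mem_iUnion₂] at hz
      obtain ⟨y, hy, hzy⟩ := hz
      by_cases hbd : ∃ b0 ∈ monoComponent G c y, b0 ∈ A.verts ∩ B.verts
      · obtain ⟨b0, hb0m, hb0d⟩ := hbd
        exact hcover1 y z b0 hzy hb0m hb0d
      · push_neg at hbd
        rcases aux_verts_cover hsup y with hyA | hyB
        · obtain ⟨hv, hmem⟩ := hcover2A y hyA hbd z hzy
          exact Or.inl ⟨⟨z, hv⟩, Set.mem_biUnion (hmemY1A y hy hyA) hmem, rfl⟩
        · obtain ⟨hv, hmem⟩ := hcover2B y hyB hbd z hzy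
          exact Or.inr ⟨⟨z, hv⟩, Set.mem_biUnion (hmemY1B y hy hyB) hmem, rfl⟩
    calc (⋃ v ∈ Y1, monoComponent G c v).ncard
        ≤ _ := Set.ncard_le_ncard hsubU (Set.toFinite _)
      _ ≤ Y1.ncard ^ 2 * g Y1.ncard := hUABcard
  · -- second bound
    intro w
    by_cases hbd : ∃ b0 ∈ monoComponent G c w, b0 ∈ A.verts ∩ B.verts
    · obtain ⟨b0, hb0m, hb0d⟩ := hbd
      have hsubU : monoComponent G c w
          ⊆ Subtype.val '' (⋃ v ∈ {v : ↥A.verts | (LA v).card = 1},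
              monoComponent (G.induce A.verts) cA v)
            ∪ Subtype.val '' (⋃ v ∈ {v : ↥B.verts | (LB v).card = 1},
              monoComponent (G.induce B.verts) cB v) :=
        fun v hv => hcover1 w v b0 hv hb0m hb0d
      calc (monoComponent G c w).ncard
          ≤ _ := Set.ncard_le_ncard hsubU (Set.toFinite _)
        _ ≤ Y1.ncard ^ 2 * g Y1.ncard := hUABcard
        _ ≤ η ^ 2 * g η := hbound2
    · push_neg at hbd
      rcases aux_verts_cover hsup w with hwA | hwB
      · have hsubU : monoComponent G c w
            ⊆ Subtype.val '' monoComponent (G.induce A.verts) cA ⟨w, hwA⟩ := by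
          intro v hv
          obtain ⟨hv', hmem⟩ := hcover2A w hwA hbd v hv
          exact ⟨⟨v, hv'⟩, hmem, rfl⟩
        calc (monoComponent G c w).ncard
            ≤ _ := Set.ncard_le_ncard hsubU (Set.toFinite _)
          _ = (monoComponent (G.induce A.verts) cA ⟨w, hwA⟩).ncard :=
              Set.ncard_image_of_injective _ Subtype.val_injective
          _ ≤ η ^ 2 * g η := hBCA.2 ⟨w, hwA⟩
      · have hsubU : monoComponent G c w
            ⊆ Subtype.val '' monoComponent (G.induce B.verts) cB ⟨w, hwB⟩ := by
          intro v hv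
          obtain ⟨hv', hmem⟩ := hcover2B w hwB hbd v hv
          exact ⟨⟨v, hv'⟩, hmem, rfl⟩
        calc (monoComponent G c w).ncard
            ≤ _ := Set.ncard_le_ncard hsubU (Set.toFinite _)
          _ = (monoComponent (G.induce B.verts) cB ⟨w, hwB⟩).ncard :=
              Set.ncard_image_of_injective _ Subtype.val_injective
          _ ≤ η ^ 2 * g η := hBCB.2 ⟨w, hwB⟩
  · -- stability
    intro x' hx' u hu w' hw' hadj
    have hADJ : (A ⊔ B).Adj u w' := by rw [hsup]; exact hadj
    rcases hADJ with hA' | hB'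
    · have huA := hA'.fst_mem
      have hwA := hA'.snd_mem
      refine hStabA x' hx' ⟨u, huA⟩ ?_ ⟨w', hwA⟩ ?_ (aux_induce_adj hA'.adj_sub)
      · show cA ⟨u, huA⟩ = x'
        rw [← hcA ⟨u, huA⟩]
        exact hu
      · show cA ⟨w', hwA⟩ = x'
        rw [← hcA ⟨w', hwA⟩]
        exact hw'
    · have huB := hB'.fst_mem
      have hwB := hB'.snd_mem
      refine hStabB x' hx' ⟨u, huB⟩ ?_ ⟨w', hwB⟩ ?_ (aux_induce_adj hB'.adj_sub)
      · show cB ⟨u, huB⟩ = x'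
        rw [← hcB ⟨u, huB⟩]
        exact hu
      · show cB ⟨w', hwB⟩ = x'
        rw [← hcB ⟨w', hwB⟩]
        exact hw'
end
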